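/- arXiv:2511.02157 — 9 statements merged into one kernel-verified Lean document; each statement's English description precedes it below -/
import Mathlib

section
/- Let d ≥ 2, let α̃ be a real number, and let R ∈ ℝ^d. (i) For every λ ∈ (0,1] and every x in the relative interior of the probability simplex Δ^d (i.e. x_k > 0 for all k, Σ_k x_k = 1), setting y := λ·x one has the objective identity ⟨R, y⟩ + α̃·log(Σ_k y_k) − (1/Σ_k y_k)·Σ_k y_k·log y_k = λ·⟨R, x⟩ + (α̃ − 1)·log λ − Σ_k x_k·log x_k. (ii) Consequently, the map (λ, x) ↦ y = λ·x is a bijection between (0,1] × {x ∈ Δ^d : x_k > 0 ∀k} and Ω := {y ∈ ℝ^d : y_k > 0 ∀k, Σ_k y_k ≤ 1}, and a pair (λ*, x*) maximizes (λ, x) ↦ λ⟨R, x⟩ + (α̃−1)log λ − Σ_k x_k log x_k over (0,1] × Δ^d if and only if y* = λ*·x* maximizes y ↦ ⟨R, y⟩ + α̃·log(Σ_k y_k) − (1/Σ_k y_k)Σ_k y_k log y_k over Ω. -/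
/-- Objective in `(λ, x)`-space:
`λ⟨R,x⟩ + (α̃−1)·log λ − Σ_k x_k log x_k`. -/
noncomputable def objLX {d : ℕ} (αt : ℝ) (R : Fin d → ℝ) (lam : ℝ) (x : Fin d → ℝ) : ℝ :=
  lam * (∑ k, R k * x k) + (αt - 1) * Real.log lam - ∑ k, x k * Real.log (x k)

/-- Objective in lifted `y`-space:
`⟨R,y⟩ + α̃·log(Σ_k y_k) − (1/Σ_k y_k)·Σ_k y_k log y_k`. -/
noncomputable def objY {d : ℕ} (αt : ℝ) (R : Fin d → ℝ) (y : Fin d → ℝ) : ℝ :=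
  (∑ k, R k * y k) + αt * Real.log (∑ k, y k)
    - (1 / ∑ k, y k) * ∑ k, y k * Real.log (y k)

/-!
Under `y = λ x` with `Σ x = 1` one has `Σ y = λ` and `y log y = λ x log λ + λ x log x`, so the
entropy term of `objY`, rescaled by `1 / Σ y`, splits off exactly `log λ`; this is the objective
identity. The map `(λ, x) ↦ λ x` is inverted by `y ↦ (Σ y, y / Σ y)`, which transports maximizers
over the open simplex. Maximizers over the closed simplex are the same, because `objLX λ` is
continuous (`t log t → 0` as `t → 0`) and the closed simplex lies in the closure of the open one.
-/

open Finset Set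

def openSimplex (ι : Type*) [Fintype ι] : Set (ι → ℝ) :=
  {x | (∀ i, 0 < x i) ∧ ∑ i, x i = 1}

def liftedSimplex (ι : Type*) [Fintype ι] : Set (ι → ℝ) :=
  {y | (∀ i, 0 < y i) ∧ ∑ i, y i ≤ 1}

section Simplex

variable {ι : Type*} [Fintype ι]

theorem bijOn_mul_openSimplex [Nonempty ι] :
    BijOn (fun p : ℝ × (ι → ℝ) => fun i => p.1 * p.2 i)
      (Set.Ioc 0 1 ×ˢ openSimplex ι) (liftedSimplex ι) := by
  refine ⟨?mapsTo, ?injOn, ?surjOn⟩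
  case mapsTo =>
    rintro ⟨lam, x⟩ ⟨⟨hlam, hlam1⟩, hx, hxs⟩
    refine ⟨fun i => mul_pos hlam (hx i), ?_⟩
    rwa [← mul_sum, hxs, mul_one]
  case injOn =>
    rintro ⟨l₁, x₁⟩ ⟨hl₁, -, hs₁⟩ ⟨l₂, x₂⟩ ⟨-, -, hs₂⟩ heq
    have hl : l₁ = l₂ := by
      simpa [← mul_sum, hs₁, hs₂] using congrArg (fun y : ι → ℝ => ∑ i, y i) heq
    subst hl
    exact Prod.ext rfl (funext fun i => mul_left_cancel₀ hl₁.1.ne' (congrFun heq i))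
  case surjOn =>
    rintro y ⟨hy, hys⟩
    have hpos : 0 < ∑ i, y i := sum_pos (fun i _ => hy i) univ_nonempty
    refine ⟨(∑ i, y i, fun i => y i / ∑ j, y j),
      ⟨⟨hpos, hys⟩, fun i => div_pos (hy i) hpos, ?_⟩, ?_⟩
    · rw [← sum_div, div_self hpos.ne']
    · exact funext fun i => mul_div_cancel₀ (y i) hpos.ne'

theorem openSegment_subset_openSimplex {x z : ι → ℝ} (hx : x ∈ stdSimplex ℝ ι)
    (hz : z ∈ openSimplex ι) : openSegment ℝ x z ⊆ openSimplex ι := by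
  rintro _ ⟨a, b, ha, hb, hab, rfl⟩
  refine ⟨fun i => ?_, ?_⟩
  · simp only [Pi.add_apply, Pi.smul_apply, smul_eq_mul]
    exact add_pos_of_nonneg_of_pos (mul_nonneg ha.le (hx.1 i)) (mul_pos hb (hz.1 i))
  · simp only [Pi.add_apply, Pi.smul_apply, smul_eq_mul]
    rw [sum_add_distrib, ← mul_sum, ← mul_sum, hx.2, hz.2, mul_one, mul_one, hab]

theorem stdSimplex_subset_closure_openSimplex (hne : (openSimplex ι).Nonempty) :
    stdSimplex ℝ ι ⊆ closure (openSimplex ι) := by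
  obtain ⟨z, hz⟩ := hne
  intro x hx
  exact closure_mono (openSegment_subset_openSimplex hx hz)
    (segment_subset_closure_openSegment (left_mem_segment ℝ x z))

end Simplex

theorem mul_mul_log_mul {a : ℝ} (ha : a ≠ 0) (b : ℝ) :
    a * b * Real.log (a * b) = a * Real.log a * b + a * (b * Real.log b) := by
  rcases eq_or_ne b 0 with rfl | hb
  · simp
  · rw [Real.log_mul ha hb]
    ring

theorem objY_mul {d : ℕ} (αt : ℝ) (R : Fin d → ℝ) {lam : ℝ} (hlam : lam ≠ 0)
    {x : Fin d → ℝ} (hx : ∑ k, x k = 1) :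
    objY αt R (fun k => lam * x k) = objLX αt R lam x := by
  have hsum : ∑ k, lam * x k = lam := by rw [← mul_sum, hx, mul_one]
  have hent : ∑ k, lam * x k * Real.log (lam * x k)
      = lam * Real.log lam + lam * ∑ k, x k * Real.log (x k) := by
    simp_rw [mul_mul_log_mul hlam, sum_add_distrib, ← mul_sum, hx, mul_one]
  have hlin : ∑ k, R k * (lam * x k) = lam * ∑ k, R k * x k := by
    rw [mul_sum]
    exact sum_congr rfl fun k _ => by ring
  simp only [objY, objLX, hsum, hent, hlin]
  field_simp
  ring

theorem continuous_objLX {d : ℕ} (αt : ℝ) (R : Fin d → ℝ) (lam : ℝ) :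
    Continuous (objLX αt R lam) := by
  unfold objLX
  fun_prop

/-- equivalence between the DLRC–OFTRL problem in `(λ,x)`-space and the lifted
optimistic FTRL problem in `y`-space: (i) the objective identity under `y = λ·x`,
(ii) `(λ,x) ↦ λ·x` is a bijection from `(0,1] × riΔ^d` onto `Ω`, and the maximizers
correspond under this map. -/
theorem dlrc_oftrl_equivalence (d : ℕ) (hd : 2 ≤ d) (αt : ℝ) (R : Fin d → ℝ) :
    -- (i) objective identity
    (∀ lam : ℝ, lam ∈ Set.Ioc (0:ℝ) 1 → ∀ x : Fin d → ℝ, (∀ k, 0 < x k) →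
      (∑ k, x k) = 1 → objY αt R (fun k => lam * x k) = objLX αt R lam x)
    ∧
    -- (ii) bijection onto the lifted simplex Ω
    Set.BijOn (fun p : ℝ × (Fin d → ℝ) => fun k => p.1 * p.2 k)
      ((Set.Ioc (0:ℝ) 1) ×ˢ {x : Fin d → ℝ | (∀ k, 0 < x k) ∧ ∑ k, x k = 1})
      {y : Fin d → ℝ | (∀ k, 0 < y k) ∧ ∑ k, y k ≤ 1}
    ∧
    -- (ii) correspondence of maximizers
    (∀ lam : ℝ, ∀ x : Fin d → ℝ, lam ∈ Set.Ioc (0:ℝ) 1 → (∀ k, 0 < x k) →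
      (∑ k, x k) = 1 →
      ((∀ lam' ∈ Set.Ioc (0:ℝ) 1, ∀ x' : Fin d → ℝ, (∀ k, 0 ≤ x' k) →
          (∑ k, x' k) = 1 → objLX αt R lam' x' ≤ objLX αt R lam x)
        ↔
       (∀ y' : Fin d → ℝ, (∀ k, 0 < y' k) → (∑ k, y' k) ≤ 1 →
          objY αt R y' ≤ objY αt R (fun k => lam * x k)))) := by
  have : Nonempty (Fin d) := ⟨⟨0, by omega⟩⟩
  have hbij := bijOn_mul_openSimplex (ι := Fin d)
  refine ⟨fun lam hlam x _ hx => objY_mul αt R hlam.1.ne' hx, hbij,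
    fun lam x hlam hx hxs => ?_⟩
  rw [objY_mul αt R hlam.1.ne' hxs]
  constructor
  · intro hmax y' hy' hys'
    obtain ⟨⟨lam', x'⟩, ⟨hlam', hx'⟩, rfl⟩ := hbij.surjOn ⟨hy', hys'⟩
    rw [objY_mul αt R hlam'.1.ne' hx'.2]
    exact hmax lam' hlam' x' (fun k => (hx'.1 k).le) hx'.2
  · intro hmax lam' hlam' x' hx' hxs'
    have hopen : openSimplex (Fin d) ⊆ {z | objLX αt R lam' z ≤ objLX αt R lam x} := by
      intro z hz
      obtain ⟨hy, hys⟩ : (fun k => lam' * z k) ∈ liftedSimplex (Fin d) :=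
        hbij.mapsTo (show (lam', z) ∈ _ from ⟨hlam', hz⟩)
      rw [mem_ofPred_eq, ← objY_mul αt R hlam'.1.ne' hz.2]
      exact hmax _ hy hys
    exact closure_minimal hopen (isClosed_le (continuous_objLX αt R lam') continuous_const)
      (stdSimplex_subset_closure_openSimplex ⟨x, hx, hxs⟩ ⟨hx', hxs'⟩)
end

section
/- Let d ≥ 2, and let H ≥ 1 and N ≥ 1 be integers. Set η := 1/(24·H^{3/2}·N), and let α̃ ≥ 2 + 2·log d + β·log² d with β ≥ 70. For R ∈ ℝ^d define f(λ; R) := (α̃ − 1)·log λ + log(Σ_{k=1}^d e^{λ·R_k}). If R, R' ∈ ℝ^d satisfy ‖R − R'‖_∞ ≤ 2·H·η, and λ̂ maximizes f(·; R) over (0,1] while λ̂' maximizes f(·; R') over (0,1], then the maximizers are multiplicatively stable: 7/10 ≤ λ̂/λ̂' ≤ 7/5. -/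
set_option maxHeartbeats 1000000


/-- The univariate learning-rate objective `f(λ; R) := (α̃−1)·log λ + log Σ_k exp(λ R_k)`. -/
noncomputable def fObj {d : ℕ} (αt : ℝ) (R : Fin d → ℝ) (lam : ℝ) : ℝ :=
  (αt - 1) * Real.log lam + Real.log (∑ k, Real.exp (lam * R k))

lemma sum_exp_pos {d : ℕ} (hd : 0 < d) (x : Fin d → ℝ) :
    0 < ∑ k, Real.exp (x k) := by
  haveI : Nonempty (Fin d) := Fin.pos_iff_nonempty.1 hd
  exact Finset.sum_pos (fun k _ => Real.exp_pos _) Finset.univ_nonempty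

lemma logsumexp_le {d : ℕ} (hd : 0 < d) (x y : Fin d → ℝ) (c : ℝ)
    (h : ∀ k, x k ≤ y k + c) :
    Real.log (∑ k, Real.exp (x k)) ≤ Real.log (∑ k, Real.exp (y k)) + c := by
  have hy : 0 < ∑ k, Real.exp (y k) := sum_exp_pos hd y
  have hle : ∑ k, Real.exp (x k) ≤ (∑ k, Real.exp (y k)) * Real.exp c := by
    rw [Finset.sum_mul]
    refine Finset.sum_le_sum fun k _ => ?_
    rw [← Real.exp_add]
    exact Real.exp_le_exp.2 (h k)
  calc Real.log (∑ k, Real.exp (x k))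
      ≤ Real.log ((∑ k, Real.exp (y k)) * Real.exp c) :=
        Real.log_le_log (sum_exp_pos hd x) hle
    _ = _ := by rw [Real.log_mul (ne_of_gt hy) (Real.exp_ne_zero c), Real.log_exp]

lemma le_logsumexp {d : ℕ} (x : Fin d → ℝ) (k0 : Fin d) :
    x k0 ≤ Real.log (∑ k, Real.exp (x k)) := by
  rw [← Real.log_exp (x k0)]
  exact Real.log_le_log (Real.exp_pos _)
    (Finset.single_le_sum (fun k _ => (Real.exp_pos _).le) (Finset.mem_univ k0))

/-- quintic polynomial inequality used for the ratio bound -/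
lemma quint_ineq (a u : ℝ) (ha : 0 ≤ a) (hu : 0 ≤ u) :
    715728775 * (a ^ 2 * (7 * a + u) ^ 3) ≤ 8575 * (31 * a + 3 * u) ^ 5 := by
  have key : 8575 * (31 * a + 3 * u) ^ 5 - 715728775 * (a ^ 2 * (7 * a + u) ^ 3) =
      13575758700 * (a ^ 4 * u) + 7960899975 * (a ^ 3 * u ^ 2)
      + 1509226475 * (a ^ 2 * u ^ 3) + 107659125 * (a * u ^ 4)
      + 2083725 * (u ^ 5) := by ring
  nlinarith [mul_nonneg (pow_nonneg ha 4) hu,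
    mul_nonneg (pow_nonneg ha 3) (pow_nonneg hu 2),
    mul_nonneg (pow_nonneg ha 2) (pow_nonneg hu 3),
    mul_nonneg ha (pow_nonneg hu 4), pow_nonneg hu 5, key]

/-- Core ratio bound: if `a ≤ b` are both `1/6`-approximate maximizers of
`fObj αt R` on `(0,1]` (we only need near-optimality against `(2a+3b)/5`),
then `b ≤ (7/5) a`. -/
lemma ratio_key {d : ℕ} (hd : 2 ≤ d) (αt β : ℝ) (hβ : 70 ≤ β)
    (hαt : 2 + 2 * Real.log d + β * (Real.log d) ^ 2 ≤ αt)
    (R : Fin d → ℝ) (a b : ℝ) (ha0 : 0 < a) (hb1 : b ≤ 1) (hab : a ≤ b)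
    (hFa : fObj αt R ((2 * a + 3 * b) / 5) ≤ fObj αt R a + 1 / 6)
    (hFb : fObj αt R ((2 * a + 3 * b) / 5) ≤ fObj αt R b + 1 / 6) :
    b ≤ 7 / 5 * a := by
  by_contra hcon
  push_neg at hcon
  have hd0 : 0 < d := by omega
  haveI : Nonempty (Fin d) := Fin.pos_iff_nonempty.1 hd0
  set L := Real.log d with hLdef
  have hLlb : (0.6931471 : ℝ) ≤ L := by
    have h2 : Real.log 2 ≤ L := Real.log_le_log (by norm_num) (by exact_mod_cast hd)
    have := Real.log_two_gt_d9
    norm_num at this ⊢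
    linarith
  have hL0 : (0 : ℝ) < L := by linarith
  have hA : 1 + 2 * L + 70 * L ^ 2 ≤ αt - 1 := by nlinarith [sq_nonneg L]
  obtain ⟨k0, -, hk0⟩ := Finset.exists_mem_eq_sup' (Finset.univ_nonempty (α := Fin d)) R
  set M := Finset.univ.sup' Finset.univ_nonempty R with hMdef
  have hRM : ∀ k, R k ≤ M := fun k => Finset.le_sup' R (Finset.mem_univ k)
  set c := (2 * a + 3 * b) / 5 with hcdef
  have hb0 : 0 < b := lt_of_lt_of_le ha0 hab
  have hc0 : 0 < c := by rw [hcdef]; linarith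
  have hac : a ≤ c := by rw [hcdef]; linarith
  have hcb : c ≤ b := by rw [hcdef]; linarith
  have hG1 : Real.log (∑ k, Real.exp (a * R k)) ≤ L + a * M := by
    have h := logsumexp_le hd0 (fun k => a * R k) (fun _ => (0 : ℝ)) (a * M)
      (fun k => by
        have := mul_le_mul_of_nonneg_left (hRM k) ha0.le
        show a * R k ≤ 0 + a * M
        linarith)
    simp only [Real.exp_zero, Finset.sum_const, Finset.card_univ, Fintype.card_fin,
      nsmul_eq_mul, mul_one] at h
    rw [hLdef]
    exact h
  have hG2 : Real.log (∑ k, Real.exp (b * R k)) ≤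
      Real.log (∑ k, Real.exp (c * R k)) + (b * M - c * M) := by
    have h := logsumexp_le hd0 (fun k => b * R k) (fun k => c * R k) (b * M - c * M)
      (fun k => by
        have := mul_le_mul_of_nonneg_left (hRM k) (show (0 : ℝ) ≤ b - c by linarith)
        show b * R k ≤ c * R k + (b * M - c * M)
        nlinarith [this])
    exact h
  have hG3 : c * M ≤ Real.log (∑ k, Real.exp (c * R k)) := by
    have h := le_logsumexp (fun k => c * R k) k0
    rw [← hk0] at h
    exact h
  have hMzero : 2 * (a * M) + 3 * (b * M) - 5 * (c * M) = 0 := by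
    rw [hcdef]; ring
  -- main inequality
  have key1 : (αt - 1) * (5 * Real.log c - 2 * Real.log a - 3 * Real.log b)
      ≤ 2 * L + 5 / 6 := by
    simp only [fObj] at hFa hFb
    have hexp : (αt - 1) * (5 * Real.log c - 2 * Real.log a - 3 * Real.log b)
        = 5 * ((αt - 1) * Real.log c) - 2 * ((αt - 1) * Real.log a)
          - 3 * ((αt - 1) * Real.log b) := by ring
    linarith [hFa, hFb, hG1, hG2, hG3, hMzero, hexp]
  -- lower bound the log expression using the polynomial inequality
  have hpoly : (28629151 : ℝ) * (a ^ 2 * b ^ 3) ≤ 26796875 * c ^ 5 := by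
    have hu : (0 : ℝ) ≤ 5 * b - 7 * a := by linarith
    have h := quint_ineq a (5 * b - 7 * a) ha0.le hu
    have hc5 : c ^ 5 = (2 * a + 3 * b) ^ 5 / 3125 := by rw [hcdef]; ring
    rw [hc5]
    nlinarith [h]
  have hψ : (1832276 : ℝ) / 28629151 ≤ 5 * Real.log c - 2 * Real.log a - 3 * Real.log b := by
    have hx : (0 : ℝ) < 28629151 * (a ^ 2 * b ^ 3) := by positivity
    have h1 := Real.log_le_log hx hpoly
    have ha' : (a : ℝ) ≠ 0 := ne_of_gt ha0
    have hb' : (b : ℝ) ≠ 0 := ne_of_gt hb0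
    have hc' : (c : ℝ) ≠ 0 := ne_of_gt hc0
    rw [Real.log_mul (by norm_num) (mul_ne_zero (pow_ne_zero 2 ha') (pow_ne_zero 3 hb')),
      Real.log_mul (pow_ne_zero 2 ha') (pow_ne_zero 3 hb'),
      Real.log_mul (by norm_num) (pow_ne_zero 5 hc'),
      Real.log_pow, Real.log_pow, Real.log_pow] at h1
    have h2 : Real.log ((26796875 : ℝ) / 28629151) ≤ 26796875 / 28629151 - 1 :=
      Real.log_le_sub_one_of_pos (by norm_num)
    rw [Real.log_div (by norm_num) (by norm_num)] at h2
    push_cast at h1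
    linarith
  have hApos : (0 : ℝ) < αt - 1 := by nlinarith
  have h2 : (1 + 2 * L + 70 * L ^ 2) * ((1832276 : ℝ) / 28629151) ≤
      (αt - 1) * (5 * Real.log c - 2 * Real.log a - 3 * Real.log b) := by
    apply mul_le_mul hA hψ (by norm_num) hApos.le
  nlinarith [h2, key1, hLlb, sq_nonneg (L - 0.6931471)]

/-- sensitivity of the optimal learning rates on regrets.  With
`η = 1/(24·H^{3/2}·N)` and `α̃ ≥ 2 + 2 log d + β log² d`, `β ≥ 70`, if
`‖R − R'‖_∞ ≤ 2Hη` then the maximizers of `f(·;R)` and `f(·;R')` on `(0,1]`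
are multiplicatively stable: `7/10 ≤ λ̂/λ̂' ≤ 7/5`. -/
theorem learning_rate_sensitivity (d H N : ℕ) (hd : 2 ≤ d) (hH : 1 ≤ H) (hN : 1 ≤ N)
    (β αt : ℝ) (hβ : 70 ≤ β)
    (hαt : 2 + 2 * Real.log d + β * (Real.log d) ^ 2 ≤ αt)
    (R R' : Fin d → ℝ)
    (hRR' : ∀ k, |R k - R' k| ≤
      2 * (H : ℝ) * (1 / (24 * (H : ℝ) * Real.sqrt H * (N : ℝ))))
    (lamh lamh' : ℝ)
    (hlamh : lamh ∈ Set.Ioc (0:ℝ) 1) (hlamh' : lamh' ∈ Set.Ioc (0:ℝ) 1)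
    (hmax : ∀ lam ∈ Set.Ioc (0:ℝ) 1, fObj αt R lam ≤ fObj αt R lamh)
    (hmax' : ∀ lam ∈ Set.Ioc (0:ℝ) 1, fObj αt R' lam ≤ fObj αt R' lamh') :
    7 / 10 ≤ lamh / lamh' ∧ lamh / lamh' ≤ 7 / 5 := by
  have hd0 : 0 < d := by omega
  have hH0 : (0 : ℝ) < H := by exact_mod_cast hH
  have hN1 : (1 : ℝ) ≤ N := by exact_mod_cast hN
  have hH1 : (1 : ℝ) ≤ H := by exact_mod_cast hH
  have hs1 : (1 : ℝ) ≤ Real.sqrt H := by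
    rw [show (1 : ℝ) = Real.sqrt 1 from Real.sqrt_one.symm]
    exact Real.sqrt_le_sqrt hH1
  -- the perturbation is at most 1/12
  have hδ : ∀ k, |R k - R' k| ≤ 1 / 12 := by
    intro k
    refine (hRR' k).trans ?_
    have hden : (0 : ℝ) < 24 * (H : ℝ) * Real.sqrt H * (N : ℝ) := by positivity
    rw [mul_one_div, div_le_div_iff₀ hden (by norm_num)]
    nlinarith [mul_le_mul hs1 hN1 (by norm_num) (Real.sqrt_nonneg (H:ℝ))]
  -- transfer: the two objectives differ by at most 1/12 on (0,1]
  have htrans : ∀ x ∈ Set.Ioc (0:ℝ) 1,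
      fObj αt R x ≤ fObj αt R' x + 1 / 12 ∧ fObj αt R' x ≤ fObj αt R x + 1 / 12 := by
    intro x hx
    obtain ⟨hx0, hx1⟩ := hx
    constructor
    · have := logsumexp_le hd0 (fun k => x * R k) (fun k => x * R' k) (1/12)
        (fun k => by nlinarith [abs_le.1 (hδ k), hδ k])
      simp only [fObj]; linarith
    · have := logsumexp_le hd0 (fun k => x * R' k) (fun k => x * R k) (1/12)
        (fun k => by nlinarith [abs_le.1 (hδ k), hδ k])
      simp only [fObj]; linarith
  -- both lamh, lamh' are 1/6-approximate maximizers of fObj αt R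
  have hnear : ∀ x ∈ Set.Ioc (0:ℝ) 1, fObj αt R x ≤ fObj αt R lamh + 1 / 6 := by
    intro x hx; linarith [hmax x hx]
  have hnear' : ∀ x ∈ Set.Ioc (0:ℝ) 1, fObj αt R x ≤ fObj αt R lamh' + 1 / 6 := by
    intro x hx
    have h1 := (htrans x hx).1
    have h2 := hmax' x hx
    have h3 := (htrans lamh' hlamh').2
    linarith
  obtain ⟨hl0, hl1⟩ := hlamh
  obtain ⟨hl0', hl1'⟩ := hlamh'
  rcases le_total lamh lamh' with hord | hord
  · -- lamh ≤ lamh' : apply ratio_key with a = lamh, b = lamh'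
    have hc : (2 * lamh + 3 * lamh') / 5 ∈ Set.Ioc (0:ℝ) 1 := by
      constructor <;> [linarith; linarith]
    have hkey := ratio_key hd αt β hβ hαt R lamh lamh' hl0 hl1' hord
      (hnear _ hc) (hnear' _ hc)
    constructor
    · rw [le_div_iff₀ hl0']; nlinarith
    · rw [div_le_iff₀ hl0']; nlinarith
  · -- lamh' ≤ lamh
    have hc : (2 * lamh' + 3 * lamh) / 5 ∈ Set.Ioc (0:ℝ) 1 := by
      constructor <;> [linarith; linarith]
    have hkey := ratio_key hd αt β hβ hαt R lamh' lamh hl0' hl1 hord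
      (hnear' _ hc) (hnear _ hc)
    constructor
    · rw [le_div_iff₀ hl0']; nlinarith
    · rw [div_le_iff₀ hl0']; nlinarith
end

section
/- Let d ≥ 2, β ≥ 70, and α̃ := 2 + 2·log d + β·log² d. Let y ∈ ℝ^d with y_k > 0 for all k and Λ(y) := Σ_{k=1}^d y_k ≤ 1, and set x := y/Λ(y). Define the d×d matrix M(y) with entries M_{ij}(y) := (α̃ − 2 + 2·Σ_{k} x_k·log x_k − log x_i − log x_j)/Λ(y)² + 1_{i=j}/(y_i·Λ(y)) (these are exactly the second partial derivatives ∂²ψ/∂y_i∂y_j of the regularizer ψ(y) = −α̃·log Λ(y) + (1/Λ(y))·Σ_k y_k·log y_k). Then for every v ∈ ℝ^d, v^T M(y) v ≥ (1/2)·Σ_{k=1}^d v_k²/(y_k·Λ(y)). -/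
lemma ptwise_bound (x : ℝ) (hx0 : 0 < x) (hx1 : x ≤ 1) :
    x * (1 - Real.log x)^2 ≤ 5.3 * Real.sqrt x := by
  set r := Real.sqrt (Real.sqrt (Real.sqrt x)) with hrdef
  have h1 : 0 < r := by positivity
  have hr2 : r^2 = Real.sqrt (Real.sqrt x) := Real.sq_sqrt (Real.sqrt_nonneg _)
  have hr4 : r^4 = Real.sqrt x := by
    rw [show r^4 = (r^2)^2 by ring, hr2]; exact Real.sq_sqrt (Real.sqrt_nonneg _)
  have hr8 : r^8 = x := by
    rw [show r^8 = (r^4)^2 by ring, hr4]; exact Real.sq_sqrt hx0.le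
  have hrle : r ≤ 1 := by
    by_contra h
    push_neg at h
    have : (1:ℝ) < r^8 := one_lt_pow₀ h (by norm_num)
    linarith [hr8 ▸ this]
  have hlog : Real.log x = 8 * Real.log r := by
    rw [← hr8, Real.log_pow]; push_cast; ring
  have hlr : -Real.log r ≤ 1/r - 1 := by
    have h := Real.log_le_sub_one_of_pos (show 0 < r⁻¹ by positivity)
    rw [Real.log_inv] at h
    rw [one_div]; linarith
  have hnn : 0 ≤ 1 - Real.log x := by
    have := Real.log_nonpos hx0.le hx1; linarith
  have hub : 1 - Real.log x ≤ 8/r - 7 := by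
    rw [hlog]
    have h8 : 8/r = 8*(1/r) := by ring
    rw [h8]; linarith
  have hsq : (1 - Real.log x)^2 ≤ (8/r - 7)^2 := pow_le_pow_left₀ hnn hub 2
  have heq : r^8 * (8/r - 7)^2 = r^4 * (r*(8 - 7*r))^2 := by
    field_simp
  have h47 : r*(8-7*r) ≤ 16/7 := by nlinarith [sq_nonneg (r - 4/7)]
  have h0 : 0 ≤ r*(8-7*r) := mul_nonneg h1.le (by linarith)
  have hmax : (r*(8-7*r))^2 ≤ (16/7)^2 := pow_le_pow_left₀ h0 h47 2
  have hr4pos : (0:ℝ) ≤ r^4 := by positivity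
  calc x * (1 - Real.log x)^2 = r^8 * (1 - Real.log x)^2 := by rw [hr8]
    _ ≤ r^8 * (8/r - 7)^2 := by
        exact mul_le_mul_of_nonneg_left hsq (by positivity)
    _ = r^4 * (r*(8 - 7*r))^2 := heq
    _ ≤ r^4 * (16/7)^2 := mul_le_mul_of_nonneg_left hmax hr4pos
    _ ≤ 5.3 * r^4 := by nlinarith
    _ = 5.3 * Real.sqrt x := by rw [hr4]

lemma term_bound (u D t : ℝ) (hu : 0 < u) (hD : 0 < D) (ht0 : 0 < t) (ht1 : t ≤ 1)
    (hDlog : Real.log D = u) :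
    2*t*(Real.log t)^2 - 2*t*Real.log t ≤ (8*u^2 + 4*u)*t + 10.6/D := by
  have hlog0 : Real.log t ≤ 0 := Real.log_nonpos ht0.le ht1
  have h106 : (0:ℝ) ≤ 10.6/D := by positivity
  by_cases hk : 1/D^2 ≤ t
  · have hlb : Real.log (1/D^2) ≤ Real.log t := Real.log_le_log (by positivity) hk
    have hval : Real.log (1/D^2) = -(2*u) := by
      rw [one_div, Real.log_inv, Real.log_pow, hDlog]; push_cast; ring
    rw [hval] at hlb
    have hsq : (Real.log t)^2 ≤ (2*u)^2 := sq_le_sq' hlb (by linarith)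
    have f1 : t * (Real.log t)^2 ≤ t * (2*u)^2 := mul_le_mul_of_nonneg_left hsq ht0.le
    have f2 : t * (-Real.log t) ≤ t * (2*u) := mul_le_mul_of_nonneg_left (by linarith) ht0.le
    nlinarith [f1, f2, h106]
  · push_neg at hk
    have hpt := ptwise_bound t ht0 ht1
    have hsqrtle : Real.sqrt t ≤ 1/D := by
      have h1 : t ≤ (1/D)^2 := by rw [div_pow, one_pow]; linarith
      calc Real.sqrt t ≤ Real.sqrt ((1/D)^2) := Real.sqrt_le_sqrt h1
        _ = 1/D := Real.sqrt_sq (by positivity)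
    have hkey : 2*t*(Real.log t)^2 - 2*t*Real.log t ≤ 2*(t * (1 - Real.log t)^2) := by
      nlinarith [mul_nonneg ht0.le (by linarith : (0:ℝ) ≤ 1 - Real.log t)]
    have h2 : 10.6 * Real.sqrt t ≤ 10.6/D := by
      have := mul_le_mul_of_nonneg_left hsqrtle (show (0:ℝ) ≤ 10.6 by norm_num)
      rw [mul_one_div] at this
      exact this
    have h3 : (0:ℝ) ≤ (8*u^2 + 4*u)*t := by positivity
    linarith


lemma core_ineq (A S L G Λ T : ℝ) (hG : 0 < G) (hA : 2*G ≤ A) (hCS : L^2 ≤ T*(Λ*G))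
    (hΛ : 0 < Λ) (hT : 0 ≤ T) : 0 ≤ A*S^2 - 2*S*L + Λ*T/2 := by
  nlinarith [sq_nonneg (2*G*S - L), mul_nonneg (mul_nonneg hG.le (sq_nonneg S))
    (sub_nonneg.2 hA), hCS]


/-- strong-convexity (Hessian) lower bound for the lifted regularizer.
For `α̃ = 2 + 2 log d + β log² d`, `β ≥ 70`, and `y` in the lifted simplex, the
Hessian matrix `M(y)` of `ψ` satisfies
`vᵀ M(y) v ≥ (1/2) Σ_k v_k² / (y_k Λ(y))` for all `v`. -/
theorem hessian_lower_bound (d : ℕ) (hd : 2 ≤ d) (β : ℝ) (hβ : 70 ≤ β)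
    (αt : ℝ) (hαt : αt = 2 + 2 * Real.log d + β * (Real.log d) ^ 2)
    (y : Fin d → ℝ) (hy : ∀ k, 0 < y k) (hΛ : (∑ k, y k) ≤ 1)
    (Λ : ℝ) (hΛdef : Λ = ∑ k, y k)
    (x : Fin d → ℝ) (hx : ∀ k, x k = y k / Λ)
    (M : Fin d → Fin d → ℝ)
    (hM : ∀ i j, M i j =
      (αt - 2 + 2 * (∑ k, x k * Real.log (x k)) - Real.log (x i) - Real.log (x j)) / Λ ^ 2
        + (if i = j then 1 / (y i * Λ) else 0)) :
    ∀ v : Fin d → ℝ,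
      (1 / 2) * ∑ k, (v k) ^ 2 / (y k * Λ) ≤ ∑ i, ∑ j, v i * M i j * v j := by
  intro v
  have hd0 : 0 < d := by omega
  have hΛpos : 0 < Λ := by
    rw [hΛdef]
    exact Finset.sum_pos (fun k _ => hy k) ⟨⟨0, hd0⟩, Finset.mem_univ _⟩
  have hxpos : ∀ k, 0 < x k := fun k => by rw [hx k]; exact div_pos (hy k) hΛpos
  have hxsum : (∑ k, x k) = 1 := by
    simp only [hx]
    rw [← Finset.sum_div, ← hΛdef, div_self hΛpos.ne']
  have hxlt : ∀ k, x k < 1 := by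
    intro k
    have hjk : ∃ j : Fin d, j ≠ k := by
      rcases eq_or_ne k ⟨0, hd0⟩ with h | h
      · exact ⟨⟨1, by omega⟩, by rw [h]; simp [Fin.ext_iff]⟩
      · exact ⟨⟨0, hd0⟩, h.symm⟩
    obtain ⟨j, hjk⟩ := hjk
    rw [hx k, div_lt_one hΛpos, hΛdef]
    exact Finset.single_lt_sum hjk (Finset.mem_univ k) (Finset.mem_univ j) (hy j)
      (fun m _ _ => (hy m).le)
  have hyx : ∀ k, y k = x k * Λ := fun k => by rw [hx k]; field_simp
  -- abbreviations
  set u : ℝ := Real.log d with hu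
  set S : ℝ := ∑ k, v k with hS
  set L : ℝ := ∑ k, v k * Real.log (x k) with hL
  set G : ℝ := ∑ k, x k * (Real.log (x k))^2 with hG
  set T : ℝ := ∑ k, (v k)^2 / y k with hT
  set A : ℝ := αt - 2 + 2 * (∑ k, x k * Real.log (x k)) with hA
  -- expansion of quadratic form
  have expand : (∑ i, ∑ j, v i * M i j * v j)
      = (A * S^2 - 2*S*L)/Λ^2 + ∑ i, (v i)^2/(y i * Λ) := by
    have h1 : ∀ i, ∑ j, v i * M i j * v j
        = (v i * (A - Real.log (x i)) * S - v i * L)/Λ^2 + (v i)^2/(y i*Λ) := by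
      intro i
      have h2 : ∀ j, v i * M i j * v j
          = (v i * (A - Real.log (x i)) * v j - v i * (v j * Real.log (x j)))/Λ^2
            + (if i = j then (v i)^2/(y i*Λ) else 0) := by
        intro j
        rw [hM i j]
        rcases eq_or_ne i j with h | h
        · subst h
          rw [if_pos rfl, if_pos rfl]
          ring
        · rw [if_neg h, if_neg h]
          ring
      have e2 : ∑ j, (v i * (A - Real.log (x i)) * v j - v i * (v j * Real.log (x j)))
          = v i * (A - Real.log (x i)) * S - v i * L := by
        rw [Finset.sum_sub_distrib, ← Finset.mul_sum, ← Finset.mul_sum]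
      rw [Finset.sum_congr rfl (fun j _ => h2 j), Finset.sum_add_distrib,
        Finset.sum_ite_eq Finset.univ i (fun _ => (v i)^2/(y i*Λ))]
      simp only [Finset.mem_univ, if_true]
      rw [← Finset.sum_div, e2]
    have hsum1 : ∑ i, v i * (A - Real.log (x i)) = A * S - L := by
      rw [Finset.sum_congr rfl (fun i _ => by ring : ∀ i ∈ Finset.univ,
        v i * (A - Real.log (x i)) = A * v i - v i * Real.log (x i))]
      rw [Finset.sum_sub_distrib, ← Finset.mul_sum, ← hS, ← hL]
    have e1 : ∑ i, (v i * (A - Real.log (x i)) * S - v i * L)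
        = (A*S - L)*S - S*L := by
      rw [Finset.sum_sub_distrib, ← Finset.sum_mul, hsum1, ← Finset.sum_mul, ← hS]
    rw [Finset.sum_congr rfl (fun i _ => h1 i), Finset.sum_add_distrib,
      ← Finset.sum_div, e1]
    ring
  -- positivity of G
  have hGpos : 0 < G := by
    rw [hG]
    refine Finset.sum_pos (fun k _ => ?_) ⟨⟨0, hd0⟩, Finset.mem_univ _⟩
    have hlneg : Real.log (x k) < 0 := Real.log_neg (hxpos k) (hxlt k)
    exact mul_pos (hxpos k) (pow_two_pos_of_ne_zero hlneg.ne)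
  -- Cauchy-Schwarz
  have hCS : L^2 ≤ T * (Λ * G) := by
    have e1 : ∀ k, (v k / Real.sqrt (y k)) * (Real.sqrt (y k) * Real.log (x k))
        = v k * Real.log (x k) := by
      intro k
      have hs : Real.sqrt (y k) ≠ 0 := (Real.sqrt_pos.2 (hy k)).ne'
      field_simp
    have e2 : ∀ k, (v k / Real.sqrt (y k))^2 = (v k)^2 / y k := by
      intro k; rw [div_pow, Real.sq_sqrt (hy k).le]
    have e3 : ∀ k, (Real.sqrt (y k) * Real.log (x k))^2 = y k * (Real.log (x k))^2 := by
      intro k; rw [mul_pow, Real.sq_sqrt (hy k).le]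
    calc L^2 = (∑ k, (v k / Real.sqrt (y k)) * (Real.sqrt (y k) * Real.log (x k)))^2 := by
          rw [hL]; congr 1; exact (Finset.sum_congr rfl (fun k _ => e1 k)).symm
      _ ≤ (∑ k, (v k / Real.sqrt (y k))^2) * ∑ k, (Real.sqrt (y k) * Real.log (x k))^2 :=
          Finset.sum_mul_sq_le_sq_mul_sq _ _ _
      _ = T * (Λ * G) := by
          rw [Finset.sum_congr rfl (fun k _ => e2 k), Finset.sum_congr rfl (fun k _ => e3 k),
            ← hT]
          congr 1
          rw [hG, Finset.mul_sum]
          exact Finset.sum_congr rfl (fun k _ => by rw [hyx k]; ring)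
  -- logarithmic bounds
  have hdpos : (0:ℝ) < d := by exact_mod_cast hd0
  have hu2 : Real.log 2 ≤ u := by
    rw [hu]; exact Real.log_le_log (by norm_num) (by exact_mod_cast hd)
  have hulb : (0.6931:ℝ) ≤ u := by
    have := Real.log_two_gt_d9; linarith
  have hupos : (0:ℝ) < u := by linarith
  -- pointwise bound for the entropy-type sum
  have hterm : ∀ k, 2 * x k * (Real.log (x k))^2 - 2 * x k * Real.log (x k)
      ≤ (8*u^2 + 4*u) * x k + 10.6/(d:ℝ) :=
    fun k => term_bound u (d:ℝ) (x k) hupos hdpos (hxpos k) (hxlt k).le hu.symm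
  -- the key sum bound
  have hGH : 2*G - 2*(∑ k, x k * Real.log (x k)) ≤ 8*u^2 + 4*u + 10.6 := by
    have hsplit : 2*G - 2*(∑ k, x k * Real.log (x k))
        = ∑ k, (2 * x k * (Real.log (x k))^2 - 2 * x k * Real.log (x k)) := by
      rw [hG, Finset.mul_sum, Finset.mul_sum, ← Finset.sum_sub_distrib]
      exact Finset.sum_congr rfl (fun k _ => by ring)
    rw [hsplit]
    calc ∑ k, (2 * x k * (Real.log (x k))^2 - 2 * x k * Real.log (x k))
        ≤ ∑ k : Fin d, ((8*u^2+4*u) * x k + 10.6/(d:ℝ)) :=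
          Finset.sum_le_sum (fun k _ => hterm k)
      _ = (8*u^2+4*u) * (∑ k, x k) + (d:ℝ)*(10.6/(d:ℝ)) := by
          rw [Finset.sum_add_distrib, ← Finset.mul_sum, Finset.sum_const, Finset.card_univ,
            Fintype.card_fin, nsmul_eq_mul]
      _ = 8*u^2 + 4*u + 10.6 := by
          rw [hxsum, mul_div_cancel₀ _ hdpos.ne']
          ring
  have hAineq : 2*G ≤ A := by
    have hnum : 8*u^2 + 4*u + 10.6 ≤ 2*u + 70*u^2 := by
      nlinarith [mul_le_mul_of_nonneg_right hulb hupos.le]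
    have hβu : 70*u^2 ≤ β*u^2 := by nlinarith [sq_nonneg u]
    rw [hA, hαt]
    linarith
  -- core inequality
  have hT0 : 0 ≤ T := Finset.sum_nonneg fun k _ => div_nonneg (sq_nonneg _) (hy k).le
  have hcore : 0 ≤ A*S^2 - 2*S*L + Λ*T/2 :=
    core_ineq A S L G Λ T hGpos hAineq hCS hΛpos hT0
  have hTdiv : ∑ k, (v k)^2/(y k * Λ) = T/Λ := by
    rw [hT, Finset.sum_div]
    exact Finset.sum_congr rfl (fun k _ => by rw [div_div])
  rw [expand, hTdiv]
  have hq : (A*S^2 - 2*S*L)/Λ^2 + T/Λ/2 = (A*S^2 - 2*S*L + Λ*T/2)/Λ^2 := by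
    field_simp
  have hfrac : 0 ≤ (A*S^2 - 2*S*L + Λ*T/2)/Λ^2 := div_nonneg hcore (sq_nonneg Λ)
  rw [← hq] at hfrac
  linarith
end

section
/- Let d ≥ 2, β ≥ 70, and α̃ := 2 + 2·log d + β·log² d. Define on Ω := {y ∈ ℝ^d : y_k > 0 ∀k, Λ(y) := Σ_k y_k ≤ 1} the regularizer ψ(y) := −α̃·log Λ(y) + (1/Λ(y))·Σ_k y_k·log y_k, with Bregman divergence D_ψ(z‖y) := ψ(z) − ψ(y) − ⟨∇ψ(y), z − y⟩. Let y, z ∈ Ω, set x := y/Λ(y), θ := z/Λ(z) and ρ := Λ(z)/Λ(y), and suppose ρ ∈ [1 − ε, 1 + ε] for some ε ∈ (0, 2/5). Then D_ψ(z‖y) ≥ ((1 − ε)/4)·‖θ − x‖₁². -/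
/-- Total mass `Λ(y) = Σ_k y_k`. -/
noncomputable def lmass {d : ℕ} (y : Fin d → ℝ) : ℝ := ∑ k, y k

/-- The lifted regularizer `ψ(y) = −α̃ log Λ(y) + (1/Λ(y)) Σ_k y_k log y_k`. -/
noncomputable def psiReg {d : ℕ} (αt : ℝ) (y : Fin d → ℝ) : ℝ :=
  -αt * Real.log (lmass y) + (1 / lmass y) * ∑ k, y k * Real.log (y k)

/-- The gradient of `ψ` on the (strictly positive) lifted simplex:
`∂ψ/∂y_i = −(α̃−1)/Λ(y) − (1/Λ(y)) Σ_k x_k log x_k + (log x_i)/Λ(y)`, `x = y/Λ(y)`. -/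
noncomputable def gradPsi {d : ℕ} (αt : ℝ) (y : Fin d → ℝ) (i : Fin d) : ℝ :=
  -(αt - 1) / lmass y
    - (1 / lmass y) * ∑ k, (y k / lmass y) * Real.log (y k / lmass y)
    + Real.log (y i / lmass y) / lmass y

/-- Bregman divergence `D_ψ(z‖y) = ψ(z) − ψ(y) − ⟨∇ψ(y), z − y⟩`. -/
noncomputable def DPsi {d : ℕ} (αt : ℝ) (z y : Fin d → ℝ) : ℝ :=
  psiReg αt z - psiReg αt y - ∑ i, gradPsi αt y i * (z i - y i)

/-!
Writing `y = Λ(y) x` and `z = Λ(z) θ`, the divergence splits exactly as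
`D_ψ(z‖y) = (α̃ - 1)(ρ - 1 - log ρ) + KL(θ‖x) + (ρ - 1) Σ_k (x_k - θ_k) log x_k`.
Pinsker's inequality `‖θ - x‖₁² ≤ 2 KL(θ‖x)`, proved from the pointwise bound
`3 (t - 1)² ≤ 2 (t + 2) (t log t - t + 1)` and Cauchy–Schwarz, leaves the cross term to control.
Coordinatewise Young inequalities bound it below by `-(1 + ε)/2 · KL(θ‖x)` minus `(ρ - 1)²` times
the weights `x_k log² (d x_k)`, `θ_k log² (d θ_k)`, whose sums are at most `log² d + 1`. The
resulting `(ρ - 1)² (4 log² d + 9)` is absorbed by `(α̃ - 1)(ρ - 1 - log ρ) ≥ 3/8 (α̃ - 1)(ρ - 1)²`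
as soon as `β ≥ 70`.
-/

open Real Set InformationTheory

theorem isMinOn_Ioi_of_sub_mul_deriv_nonneg {f f' : ℝ → ℝ} {a c : ℝ} (hc : a < c)
    (hf : ∀ t ∈ Ioi a, HasDerivAt f (f' t) t) (hf' : ∀ t ∈ Ioi a, 0 ≤ (t - c) * f' t) :
    IsMinOn f (Ioi a) c := by
  have hcont : ContinuousOn f (Ioi a) := fun t ht => (hf t ht).continuousAt.continuousWithinAt
  intro t (ht : a < t)
  rcases le_total c t with hct | htc
  · refine monotoneOn_of_hasDerivWithinAt_nonneg (f' := f') (convex_Ici c)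
      (hcont.mono fun s hs => hc.trans_le hs) (fun s hs => ?_) (fun s hs => ?_)
      self_mem_Ici hct hct
    · rw [interior_Ici] at hs ⊢
      exact (hf s (hc.trans hs)).hasDerivWithinAt
    · rw [interior_Ici] at hs
      exact nonneg_of_mul_nonneg_right (hf' s (hc.trans hs)) (sub_pos.2 hs)
  · refine antitoneOn_of_hasDerivWithinAt_nonpos (f' := f') (convex_Ioc a c)
      (hcont.mono fun s hs => hs.1) (fun s hs => ?_) (fun s hs => ?_)
      ⟨ht, htc⟩ ⟨hc, le_rfl⟩ htc
    · rw [interior_Ioc] at hs ⊢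
      exact (hf s hs.1).hasDerivWithinAt
    · rw [interior_Ioc] at hs
      exact nonpos_of_mul_nonneg_right (hf' s hs.1) (sub_neg.2 hs.2)

theorem sub_one_mul_log_sub_nonneg {t : ℝ} (ht : 0 < t) :
    0 ≤ (t - 1) * (log t - 2 * (t - 1) / (t + 1)) := by
  set h : ℝ → ℝ := fun s => log s - 2 * (s - 1) / (s + 1)
  have hderiv : ∀ s ∈ Ioi (0 : ℝ), HasDerivAt h ((s - 1) ^ 2 / (s * (s + 1) ^ 2)) s := by
    intro s (hs : 0 < s)
    refine ((hasDerivAt_log hs.ne').sub ((((hasDerivAt_id' s).sub_const 1).const_mul 2).div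
      ((hasDerivAt_id' s).add_const 1) (by positivity))).congr_deriv ?_
    field_simp
    ring
  have hmono : MonotoneOn h (Ioi 0) :=
    monotoneOn_of_hasDerivWithinAt_nonneg (convex_Ioi 0)
      (fun s hs => (hderiv s hs).continuousAt.continuousWithinAt)
      (fun s hs => (hderiv s (interior_subset hs)).hasDerivWithinAt)
      (fun s hs => by have : 0 < s := interior_subset hs; positivity)
  have h1 : h 1 = 0 := by simp [h]
  rcases le_total 1 t with h1t | ht1
  · exact mul_nonneg (sub_nonneg.2 h1t) (h1 ▸ hmono (mem_Ioi.2 one_pos) ht h1t)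
  · exact mul_nonneg_of_nonpos_of_nonpos (sub_nonpos.2 ht1)
      (h1 ▸ hmono ht (mem_Ioi.2 one_pos) ht1)

theorem sq_sub_one_le_mul_klFun {t : ℝ} (ht : 0 < t) :
    3 / 2 * (t - 1) ^ 2 ≤ (t + 2) * klFun t := by
  set g : ℝ → ℝ := fun s => (s + 2) * klFun s - 3 / 2 * (s - 1) ^ 2
  have hderiv : ∀ s ∈ Ioi (0 : ℝ),
      HasDerivAt g (2 * (s + 1) * (log s - 2 * (s - 1) / (s + 1))) s := by
    intro s (hs : 0 < s)
    refine ((((hasDerivAt_id' s).add_const 2).mul (hasDerivAt_klFun hs.ne')).sub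
      ((((hasDerivAt_id' s).sub_const 1).pow 2).const_mul (3 / 2))).congr_deriv ?_
    rw [klFun_apply]
    field_simp
    ring
  have hmin := isMinOn_Ioi_of_sub_mul_deriv_nonneg one_pos hderiv fun s (hs : 0 < s) => by
    have := sub_one_mul_log_sub_nonneg hs
    calc 0 ≤ 2 * (s + 1) * ((s - 1) * (log s - 2 * (s - 1) / (s + 1))) := by positivity
      _ = _ := by ring
  have : g 1 ≤ g t := hmin (show t ∈ Ioi 0 from ht)
  simp only [g, klFun_one] at this
  linarith

theorem mul_klFun_div {a b : ℝ} (ha : 0 < a) : a * klFun (b / a) = b * log (b / a) + a - b := by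
  rw [klFun_apply]
  field_simp

theorem sq_sub_le_mul_mul_klFun_div {a b : ℝ} (ha : 0 < a) (hb : 0 < b) :
    3 / 2 * (b - a) ^ 2 ≤ (b + 2 * a) * (a * klFun (b / a)) :=
  calc 3 / 2 * (b - a) ^ 2 = a ^ 2 * (3 / 2 * (b / a - 1) ^ 2) := by field_simp
    _ ≤ a ^ 2 * ((b / a + 2) * klFun (b / a)) :=
      mul_le_mul_of_nonneg_left (sq_sub_one_le_mul_klFun (div_pos hb ha)) (sq_nonneg a)
    _ = (b + 2 * a) * (a * klFun (b / a)) := by field_simp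

theorem sq_sub_le_two_mul_max_mul_klFun_div {a b : ℝ} (ha : 0 < a) (hb : 0 < b) :
    (a - b) ^ 2 ≤ 2 * max a b * (a * klFun (b / a)) := by
  have hκ : 0 ≤ a * klFun (b / a) := mul_nonneg ha.le (klFun_nonneg (div_pos hb ha).le)
  have := sq_sub_le_mul_mul_klFun_div ha hb
  have : b + 2 * a ≤ 3 * max a b := by linarith [le_max_left a b, le_max_right a b]
  nlinarith

theorem sq_sum_abs_sub_le_two_mul_sum_mul_klFun {ι : Type*} [Fintype ι] {x θ : ι → ℝ}
    (hx : ∀ i, 0 < x i) (hθ : ∀ i, 0 < θ i) (hx1 : ∑ i, x i = 1) (hθ1 : ∑ i, θ i = 1) :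
    (∑ i, |θ i - x i|) ^ 2 ≤ 2 * ∑ i, x i * klFun (θ i / x i) := by
  have hw : ∀ i, 0 < θ i + 2 * x i := fun i => by linarith [hx i, hθ i]
  have hcs := Finset.sq_sum_div_le_sum_sq_div Finset.univ (fun i => |θ i - x i|)
    (fun i _ => hw i)
  have hsum : ∑ i, (θ i + 2 * x i) = 3 := by
    rw [Finset.sum_add_distrib, ← Finset.mul_sum, hx1, hθ1]
    norm_num
  have hterm :
      ∀ i, |θ i - x i| ^ 2 / (θ i + 2 * x i) ≤ 2 / 3 * (x i * klFun (θ i / x i)) := by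
    intro i
    rw [div_le_iff₀ (hw i), sq_abs]
    linarith [sq_sub_le_mul_mul_klFun_div (hx i) (hθ i)]
  rw [hsum] at hcs
  have := hcs.trans (Finset.sum_le_sum fun i _ => hterm i)
  rw [← Finset.mul_sum] at this
  linarith

theorem three_eighths_mul_sq_le_sub_one_sub_log {ρ : ℝ} (hρ : 0 < ρ) (hρ1 : ρ ≤ 3 / 2) :
    3 / 8 * (ρ - 1) ^ 2 ≤ ρ - 1 - log ρ := by
  have h := sq_sub_le_mul_mul_klFun_div hρ one_pos
  rw [mul_klFun_div hρ, one_mul, log_div one_ne_zero hρ.ne', log_one, zero_sub] at h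
  have : 0 ≤ ρ - 1 - log ρ := by linarith [log_le_sub_one_of_pos hρ]
  nlinarith

theorem neg_le_mul_mul_of_sq_le_two_mul {u m κ s δ w : ℝ} (hm : 0 < m) (hs : 0 < s)
    (hu : u ^ 2 ≤ 2 * m * κ) :
    -(s * κ) - δ ^ 2 * m * w ^ 2 / (2 * s) ≤ δ * u * w := by
  have key : 0 ≤ 2 * s * m * (δ * u * w + s * κ + δ ^ 2 * m * w ^ 2 / (2 * s)) := by
    have : 2 * s * m * (δ * u * w + s * κ + δ ^ 2 * m * w ^ 2 / (2 * s))
        = (m * δ * w + s * u) ^ 2 + s ^ 2 * (2 * m * κ - u ^ 2) := by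
      field_simp
      ring
    rw [this]
    have : 0 ≤ 2 * m * κ - u ^ 2 := by linarith
    positivity
  have := nonneg_of_mul_nonneg_right key (by positivity)
  linarith

theorem sub_mul_log_div_le {a b : ℝ} (ha : 0 < a) (hab : a ≤ b) :
    (b - a) * log (b / a) ≤ a * klFun (b / a) + (b - a) := by
  have hlog : 0 ≤ log (b / a) := log_nonneg ((one_le_div ha).2 hab)
  rw [mul_klFun_div ha]
  nlinarith [mul_nonneg ha.le hlog]

theorem neg_le_mul_sub_mul_log_div {a b δ ε : ℝ} (ha : 0 < a) (hab : a ≤ b) (hδ : |δ| ≤ ε) :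
    -((ε + 1 / 10) * (a * klFun (b / a)) + 5 * δ ^ 2 * b) ≤ δ * ((b - a) * log (b / a)) := by
  have hb : 0 < b := ha.trans_le hab
  set κ := a * klFun (b / a)
  have hκ : 0 ≤ κ := mul_nonneg ha.le (klFun_nonneg (div_pos hb ha).le)
  have hquad := sq_sub_le_two_mul_max_mul_klFun_div ha hb
  rw [max_eq_right hab] at hquad
  have hlin := neg_le_mul_mul_of_sq_le_two_mul (δ := |δ|) (w := 1) hb
    (by norm_num : (0 : ℝ) < 1 / 10) hquad
  have hcross : -(|δ| * ((b - a) * log (b / a))) ≤ δ * ((b - a) * log (b / a)) := by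
    have := neg_abs_le (δ * ((b - a) * log (b / a)))
    rwa [abs_mul, abs_of_nonneg (mul_nonneg (sub_nonneg.2 hab)
      (log_nonneg ((one_le_div ha).2 hab)))] at this
  have := mul_le_mul_of_nonneg_left (sub_mul_log_div_le ha hab) (abs_nonneg δ)
  rw [sq_abs] at hlin
  norm_num at hlin
  linarith [mul_le_mul_of_nonneg_right hδ hκ]

theorem neg_le_mul_sub_mul_log {a b c δ ε : ℝ} (ha : 0 < a) (hb : 0 < b) (hc : 0 < c)
    (hδ : |δ| ≤ ε) (hε : ε ≤ 2 / 5) :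
    -((1 + ε) / 2 * (a * klFun (b / a)))
        - δ ^ 2 * (a * log (c * a) ^ 2 + 3 * b * log (c * b) ^ 2 + 5 * b)
      ≤ δ * (a - b) * log (c * a) := by
  set κ := a * klFun (b / a)
  have hκ : 0 ≤ κ := mul_nonneg ha.le (klFun_nonneg (div_pos hb ha).le)
  have hquad := sq_sub_le_two_mul_max_mul_klFun_div ha hb
  have hε0 : 0 ≤ ε := (abs_nonneg δ).trans hδ
  have hEa : 0 ≤ δ ^ 2 * (a * log (c * a) ^ 2) := by positivity
  have hEb : 0 ≤ δ ^ 2 * (3 * b * log (c * b) ^ 2 + 5 * b) := by positivity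
  rcases le_total b a with hba | hab
  · rw [max_eq_left hba] at hquad
    have := neg_le_mul_mul_of_sq_le_two_mul (δ := δ) (w := log (c * a)) ha one_half_pos hquad
    linarith [mul_nonneg hε0 hκ]
  -- here `a * log (c * a) ^ 2` cannot pay for the cross term, so move the weight to `b`
  · rw [max_eq_right hab] at hquad
    have hsplit : δ * (a - b) * log (c * a)
        = δ * (a - b) * log (c * b) + δ * ((b - a) * log (b / a)) := by
      rw [log_div hb.ne' ha.ne', log_mul hc.ne' ha.ne', log_mul hc.ne' hb.ne']
      ring
    have hmain := neg_le_mul_mul_of_sq_le_two_mul (δ := δ) (w := log (c * b)) hb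
      (by norm_num : (0 : ℝ) < 1 / 6) hquad
    have hlog := neg_le_mul_sub_mul_log_div ha hab hδ
    norm_num at hmain
    -- the divergence is charged `1/6 + 1/10 + ε ≤ (1 + ε)/2`: this is where `ε ≤ 2/5` enters
    linarith [mul_nonneg hκ (by linarith : (0 : ℝ) ≤ 2 / 5 - ε)]

theorem one_le_card_of_sum_eq_one {ι : Type*} [Fintype ι] {x : ι → ℝ}
    (hx1 : ∑ i, x i = 1) : (1 : ℝ) ≤ Fintype.card ι := by
  have : Nonempty ι :=
    Finset.univ_nonempty_iff.1 (Finset.nonempty_of_sum_ne_zero (hx1 ▸ one_ne_zero))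
  exact_mod_cast Fintype.card_pos

theorem sq_le_exp {v : ℝ} (hv : 0 ≤ v) : v ^ 2 ≤ exp v := by
  have hquarter : v ≤ (v / 4 + 1) ^ 2 := by nlinarith [sq_nonneg (v / 4 - 1)]
  calc v ^ 2 ≤ ((v / 4 + 1) ^ 2) ^ 2 := pow_le_pow_left₀ hv hquarter 2
    _ = (v / 4 + 1) ^ 4 := by ring
    _ ≤ exp (v / 4) ^ 4 := pow_le_pow_left₀ (by linarith) (add_one_le_exp _) 4
    _ = exp v := by rw [← exp_nat_mul]; ring_nf

theorem mul_sq_log_le_one {s : ℝ} (hs : 0 < s) (hs1 : s ≤ 1) : s * log s ^ 2 ≤ 1 := by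
  have h := sq_le_exp (neg_nonneg.2 (log_nonpos hs.le hs1))
  rw [exp_neg, exp_log hs, neg_sq] at h
  calc s * log s ^ 2 ≤ s * s⁻¹ := mul_le_mul_of_nonneg_left h hs.le
    _ = 1 := mul_inv_cancel₀ hs.ne'

theorem mul_sq_log_mul_le {a D : ℝ} (ha : 0 < a) (ha1 : a ≤ 1) (hD : 1 ≤ D) :
    a * log (D * a) ^ 2 ≤ a * log D ^ 2 + 1 / D := by
  have hD0 : 0 < D := one_pos.trans_le hD
  rcases le_total 1 (D * a) with h | h
  · have hlog : log (D * a) ≤ log D := log_le_log (by positivity) (by nlinarith)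
    have : log (D * a) ^ 2 ≤ log D ^ 2 := pow_le_pow_left₀ (log_nonneg h) hlog 2
    have : 0 ≤ 1 / D := by positivity
    nlinarith
  · have hmul : a * log (D * a) ^ 2 = D * a * log (D * a) ^ 2 / D := by field_simp
    have : D * a * log (D * a) ^ 2 / D ≤ 1 / D :=
      div_le_div_of_nonneg_right (mul_sq_log_le_one (by positivity) h) hD0.le
    nlinarith [mul_nonneg ha.le (sq_nonneg (log D))]

theorem sum_mul_sq_log_card_mul_le {ι : Type*} [Fintype ι] {x : ι → ℝ} (hx : ∀ i, 0 < x i)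
    (hx1 : ∑ i, x i = 1) :
    ∑ i, x i * log (Fintype.card ι * x i) ^ 2 ≤ log (Fintype.card ι) ^ 2 + 1 := by
  have hcard := one_le_card_of_sum_eq_one hx1
  have hx_le : ∀ i, x i ≤ 1 := fun i =>
    hx1 ▸ Finset.single_le_sum (fun j _ => (hx j).le) (Finset.mem_univ i)
  calc ∑ i, x i * log (Fintype.card ι * x i) ^ 2
      ≤ ∑ i, (x i * log (Fintype.card ι) ^ 2 + 1 / Fintype.card ι) :=
        Finset.sum_le_sum fun i _ => mul_sq_log_mul_le (hx i) (hx_le i) hcard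
    _ = log (Fintype.card ι) ^ 2 + 1 := by
      rw [Finset.sum_add_distrib, ← Finset.sum_mul, hx1, Finset.sum_const, Finset.card_univ,
        nsmul_eq_mul, mul_one_div_cancel (by positivity), one_mul]

theorem neg_le_mul_sum_sub_mul_log {ι : Type*} [Fintype ι] {x θ : ι → ℝ}
    (hx : ∀ i, 0 < x i) (hθ : ∀ i, 0 < θ i) (hx1 : ∑ i, x i = 1) (hθ1 : ∑ i, θ i = 1)
    {δ ε : ℝ} (hδ : |δ| ≤ ε) (hε : ε ≤ 2 / 5) :
    -((1 + ε) / 2 * ∑ i, x i * klFun (θ i / x i)) - δ ^ 2 * (4 * log (Fintype.card ι) ^ 2 + 9)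
      ≤ δ * ∑ i, (x i - θ i) * log (x i) := by
  set n : ℝ := (Fintype.card ι : ℝ)
  have hn : 0 < n := one_pos.trans_le (one_le_card_of_sum_eq_one hx1)
  -- `x` and `θ` have the same mass, so `log` may be recentred at `1 / n` in the cross term
  have hshift : ∑ i, (x i - θ i) * log (x i) = ∑ i, (x i - θ i) * log (n * x i) := by
    simp only [log_mul hn.ne' (hx _).ne', mul_add, Finset.sum_add_distrib, ← Finset.sum_mul,
      Finset.sum_sub_distrib, hx1, hθ1, sub_self, zero_mul, zero_add]
  have hterm := Finset.sum_le_sum fun i (_ : i ∈ Finset.univ) =>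
    neg_le_mul_sub_mul_log (hx i) (hθ i) hn hδ hε
  have henergy : ∑ i, (x i * log (n * x i) ^ 2 + 3 * θ i * log (n * θ i) ^ 2 + 5 * θ i)
      ≤ 4 * log n ^ 2 + 9 := by
    simp only [Finset.sum_add_distrib, mul_assoc, ← Finset.mul_sum, hθ1]
    linarith [sum_mul_sq_log_card_mul_le hx hx1, sum_mul_sq_log_card_mul_le hθ hθ1]
  rw [Finset.sum_sub_distrib, Finset.sum_neg_distrib, ← Finset.mul_sum, ← Finset.mul_sum]
    at hterm
  simp only [mul_assoc δ, ← Finset.mul_sum] at hterm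
  rw [hshift]
  linarith [mul_le_mul_of_nonneg_left henergy (sq_nonneg δ)]

section Regularizer

variable {d : ℕ} (αt : ℝ) {x θ : Fin d → ℝ} {P Q : ℝ}

theorem lmass_pos {y : Fin d → ℝ} (hd : 0 < d) (hy : ∀ k, 0 < y k) : 0 < lmass y :=
  Finset.sum_pos (fun k _ => hy k) ⟨⟨0, hd⟩, Finset.mem_univ _⟩

theorem lmass_smul (c : ℝ) (x : Fin d → ℝ) : lmass (c • x) = c * lmass x := by
  simp only [lmass, Pi.smul_apply, smul_eq_mul, Finset.mul_sum]

theorem lmass_eq_one_of_eq_div_lmass {y : Fin d → ℝ} (hy : lmass y ≠ 0)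
    (hx : ∀ k, x k = y k / lmass y) : lmass x = 1 := by
  simp only [lmass, hx, ← Finset.sum_div]
  exact div_self hy

theorem smul_eq_of_eq_div_lmass {y : Fin d → ℝ} (hy : lmass y ≠ 0)
    (hx : ∀ k, x k = y k / lmass y) : lmass y • x = y := by
  funext k
  rw [Pi.smul_apply, smul_eq_mul, hx k, mul_div_cancel₀ _ hy]

theorem psiReg_smul (hx : ∀ k, 0 < x k) (hx1 : lmass x = 1) (hP : 0 < P) :
    psiReg αt (P • x) = -(αt - 1) * log P + ∑ k, x k * log (x k) := by
  have hterm : ∀ k, (P • x) k * log ((P • x) k) = P * log P * x k + P * (x k * log (x k)) :=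
    fun k => by rw [Pi.smul_apply, smul_eq_mul, log_mul hP.ne' (hx k).ne']; ring
  simp only [psiReg, lmass_smul, hx1, mul_one, hterm, Finset.sum_add_distrib, ← Finset.mul_sum]
  rw [show ∑ k, x k = 1 from hx1]
  field_simp
  ring

theorem gradPsi_smul (hx1 : lmass x = 1) (hP : 0 < P) (i : Fin d) :
    gradPsi αt (P • x) i = (-(αt - 1) - ∑ k, x k * log (x k) + log (x i)) / P := by
  have hmass : lmass (P • x) = P := by rw [lmass_smul, hx1, mul_one]
  have hdiv : ∀ k, (P • x) k / P = x k := fun k => by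
    rw [Pi.smul_apply, smul_eq_mul, mul_div_cancel_left₀ _ hP.ne']
  simp only [gradPsi, hmass, hdiv]
  field_simp

theorem DPsi_smul_smul (hx : ∀ k, 0 < x k) (hθ : ∀ k, 0 < θ k) (hx1 : lmass x = 1)
    (hθ1 : lmass θ = 1) (hP : 0 < P) (hQ : 0 < Q) :
    DPsi αt (Q • θ) (P • x)
      = (αt - 1) * (Q / P - 1 - log (Q / P)) + ∑ k, x k * klFun (θ k / x k)
        + (Q / P - 1) * ∑ k, (x k - θ k) * log (x k) := by
  have hkl : ∑ k, x k * klFun (θ k / x k)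
      = ∑ k, θ k * log (θ k) - ∑ k, θ k * log (x k) := by
    have : ∀ k, x k * klFun (θ k / x k) = θ k * log (θ k) - θ k * log (x k) + (x k - θ k) :=
      fun k => by rw [mul_klFun_div (hx k), log_div (hθ k).ne' (hx k).ne']; ring
    simp only [this, Finset.sum_add_distrib, Finset.sum_sub_distrib]
    rw [show ∑ k, x k = 1 from hx1, show ∑ k, θ k = 1 from hθ1]
    ring
  have hgrad : ∑ i, gradPsi αt (P • x) i * ((Q • θ) i - (P • x) i)
      = (-(αt - 1) - ∑ k, x k * log (x k)) * (Q - P) / P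
        + Q / P * ∑ k, θ k * log (x k) - ∑ k, x k * log (x k) := by
    have : ∀ i, gradPsi αt (P • x) i * ((Q • θ) i - (P • x) i)
        = (-(αt - 1) - ∑ k, x k * log (x k)) / P * (Q * θ i - P * x i)
          + Q / P * (θ i * log (x i)) - x i * log (x i) := fun i => by
      rw [gradPsi_smul αt hx1 hP, Pi.smul_apply, Pi.smul_apply, smul_eq_mul, smul_eq_mul]
      field_simp
      ring
    simp only [this, Finset.sum_add_distrib, Finset.sum_sub_distrib, ← Finset.mul_sum]
    rw [show ∑ k, x k = 1 from hx1, show ∑ k, θ k = 1 from hθ1]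
    ring
  have hcross : ∑ k, (x k - θ k) * log (x k)
      = ∑ k, x k * log (x k) - ∑ k, θ k * log (x k) := by
    simp only [sub_mul, Finset.sum_sub_distrib]
  rw [DPsi, psiReg_smul αt hθ hθ1 hQ, psiReg_smul αt hx hx1 hP, hgrad, hkl, hcross,
    log_div hQ.ne' hP.ne']
  field_simp
  ring

end Regularizer

theorem four_mul_sq_log_add_nine_le {d : ℕ} (hd : 2 ≤ d) {β : ℝ} (hβ : 70 ≤ β) :
    4 * log d ^ 2 + 9 ≤ 3 / 8 * (1 + 2 * log d + β * log d ^ 2) := by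
  have hlog : 0.6931 ≤ log d :=
    (log_two_gt_d9.trans_le (log_le_log two_pos (by exact_mod_cast hd))).le.trans' (by norm_num)
  nlinarith [mul_le_mul_of_nonneg_right hβ (sq_nonneg (log d))]

theorem bregman_curvature_action_simplex_general (d : ℕ) (hd : 2 ≤ d)
    (β : ℝ) (hβ : 70 ≤ β)
    (αt : ℝ) (hαt : αt = 2 + 2 * Real.log d + β * (Real.log d) ^ 2)
    (y z : Fin d → ℝ)
    (hy : ∀ k, 0 < y k)
    (hz : ∀ k, 0 < z k)
    (x θ : Fin d → ℝ) (hx : ∀ k, x k = y k / lmass y) (hθ : ∀ k, θ k = z k / lmass z)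
    (ρ : ℝ) (hρ : ρ = lmass z / lmass y)
    (ε : ℝ) (hε : ε ∈ Set.Ioo (0:ℝ) (2/5))
    (hstab : ρ ∈ Set.Icc (1 - ε) (1 + ε)) :
    ((1 - ε) / 4) * (∑ k, |θ k - x k|) ^ 2 ≤ DPsi αt z y := by
  obtain ⟨hε0, hε1⟩ := hε
  obtain ⟨hρl, hρu⟩ := hstab
  have hP := lmass_pos (by omega) hy
  have hQ := lmass_pos (by omega) hz
  have hxpos : ∀ k, 0 < x k := fun k => hx k ▸ div_pos (hy k) hP
  have hθpos : ∀ k, 0 < θ k := fun k => hθ k ▸ div_pos (hz k) hQ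
  have hx1 := lmass_eq_one_of_eq_div_lmass hP.ne' hx
  have hθ1 := lmass_eq_one_of_eq_div_lmass hQ.ne' hθ
  have hD := DPsi_smul_smul αt hxpos hθpos hx1 hθ1 hP hQ
  rw [smul_eq_of_eq_div_lmass hP.ne' hx, smul_eq_of_eq_div_lmass hQ.ne' hθ, ← hρ] at hD
  have hδ : |ρ - 1| ≤ ε := abs_sub_le_iff.2 ⟨by linarith, by linarith⟩
  have hpinsker := sq_sum_abs_sub_le_two_mul_sum_mul_klFun hxpos hθpos hx1 hθ1
  have hcross := neg_le_mul_sum_sub_mul_log hxpos hθpos hx1 hθ1 hδ hε1.le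
  rw [Fintype.card_fin] at hcross
  have hf := three_eighths_mul_sq_le_sub_one_sub_log (ρ := ρ) (by linarith) (by linarith)
  have hα := four_mul_sq_log_add_nine_le hd hβ
  subst hαt
  rw [hD]
  have hA : 0 ≤ 1 + 2 * log d + β * log d ^ 2 := by linarith [sq_nonneg (log (d : ℝ))]
  linarith [mul_le_mul_of_nonneg_left hf hA, mul_le_mul_of_nonneg_left hα (sq_nonneg (ρ - 1)),
    mul_le_mul_of_nonneg_left hpinsker (by linarith : (0:ℝ) ≤ 1 - ε)]

/-- curvature on the action simplex under mass stability:
if `ρ = Λ(z)/Λ(y) ∈ [1−ε, 1+ε]` with `ε ∈ (0, 2/5)`, then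
`D_ψ(z‖y) ≥ ((1−ε)/4)·‖θ − x‖₁²` where `x = y/Λ(y)`, `θ = z/Λ(z)`. -/
theorem bregman_curvature_action_simplex (d : ℕ) (hd : 2 ≤ d)
    (β : ℝ) (hβ : 70 ≤ β)
    (αt : ℝ) (hαt : αt = 2 + 2 * Real.log d + β * (Real.log d) ^ 2)
    (y z : Fin d → ℝ)
    (hy : ∀ k, 0 < y k) (hyΛ : lmass y ≤ 1)
    (hz : ∀ k, 0 < z k) (hzΛ : lmass z ≤ 1)
    (x θ : Fin d → ℝ) (hx : ∀ k, x k = y k / lmass y) (hθ : ∀ k, θ k = z k / lmass z)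
    (ρ : ℝ) (hρ : ρ = lmass z / lmass y)
    (ε : ℝ) (hε : ε ∈ Set.Ioo (0:ℝ) (2/5))
    (hstab : ρ ∈ Set.Icc (1 - ε) (1 + ε)) :
    ((1 - ε) / 4) * (∑ k, |θ k - x k|) ^ 2 ≤ DPsi αt z y :=
  bregman_curvature_action_simplex_general d hd β hβ αt hαt y z hy hz x θ hx hθ ρ hρ ε hε hstab
end

section
/- Let d ≥ 1, T ≥ 1, and for each t ∈ {1,…,T} let ν^{(t)} ∈ ℝ^d, w_t > 0, and y^{(t)} ∈ Ω := {y ∈ ℝ^d : y_k > 0 ∀k, Σ_k y_k ≤ 1}; set x^{(t)} := y^{(t)}/Σ_k y^{(t)}_k ∈ Δ^d and u^{(t)} := w_t·(ν^{(t)} − ⟨ν^{(t)}, x^{(t)}⟩·1_d), where 1_d is the all-ones vector. Define the lifted regret R̃(T) := max over y* ∈ {y ∈ ℝ^d : y_k ≥ 0, Σ_k y_k ≤ 1} of Σ_{t=1}^T ⟨u^{(t)}, y* − y^{(t)}⟩, and the weighted external regret Reg(T) := max over x* ∈ Δ^d of Σ_{t=1}^T w_t·(⟨ν^{(t)}, x*⟩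 − ⟨ν^{(t)}, x^{(t)}⟩). Then R̃(T) = max{0, Reg(T)}; in particular R̃(T) ≥ 0 and R̃(T) ≥ Reg(T). -/
/-!
Both regrets are suprema of the same linear functional `z ↦ c ⬝ᵥ z` with `c = ∑ₜ u⁽ᵗ⁾`: each
`u⁽ᵗ⁾` is orthogonal to `y⁽ᵗ⁾`, a nonnegative multiple of `x⁽ᵗ⁾`, and on the simplex `u⁽ᵗ⁾ ⬝ᵥ z`
is the weighted instantaneous regret against `z`. Every nonzero point of the lifted feasible set
is `s • z` with `s ∈ (0, 1]` and `z` in the simplex, so the supremum over it is the positive part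
of the supremum over the simplex.
-/

open Finset

def subStdSimplex (ι : Type*) [Fintype ι] : Set (ι → ℝ) :=
  {y | (∀ k, 0 ≤ y k) ∧ ∑ k, y k ≤ 1}

section Simplex

variable {ι : Type*} [Fintype ι]

lemma zero_mem_subStdSimplex : (0 : ι → ℝ) ∈ subStdSimplex ι :=
  ⟨fun _ => le_rfl, by simp⟩

lemma stdSimplex_subset_subStdSimplex : stdSimplex ℝ ι ⊆ subStdSimplex ι :=
  fun _ hz => ⟨hz.1, hz.2.le⟩

lemma subStdSimplex_subset_Icc : subStdSimplex ι ⊆ Set.Icc 0 1 :=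
  fun _ hy => ⟨hy.1, fun k => (single_le_sum (fun j _ => hy.1 j) (mem_univ k)).trans hy.2⟩

lemma inv_sum_smul_mem_stdSimplex {y : ι → ℝ} (hy : ∀ k, 0 ≤ y k) (hs : ∑ k, y k ≠ 0) :
    (∑ k, y k)⁻¹ • y ∈ stdSimplex ℝ ι :=
  ⟨fun k => smul_nonneg (inv_nonneg.2 (sum_nonneg fun j _ => hy j)) (hy k),
    by simp [← mul_sum, hs]⟩

lemma bddAbove_dotProduct_image_subStdSimplex (c : ι → ℝ) :
    BddAbove ((c ⬝ᵥ ·) '' subStdSimplex ι) :=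
  ((isCompact_Icc.image (by fun_prop)).bddAbove).mono (Set.image_mono subStdSimplex_subset_Icc)

lemma dotProduct_le_max_zero_sSup_of_mem_subStdSimplex (c : ι → ℝ) {y : ι → ℝ}
    (hy : y ∈ subStdSimplex ι) :
    c ⬝ᵥ y ≤ max 0 (sSup ((c ⬝ᵥ ·) '' stdSimplex ℝ ι)) := by
  set M := max 0 (sSup ((c ⬝ᵥ ·) '' stdSimplex ℝ ι))
  set s := ∑ k, y k
  by_cases hs : s = 0
  · rw [(Fintype.sum_eq_zero_iff_of_nonneg hy.1).1 hs, dotProduct_zero]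
    exact le_max_left _ _
  have hbdd : BddAbove ((c ⬝ᵥ ·) '' stdSimplex ℝ ι) :=
    (bddAbove_dotProduct_image_subStdSimplex c).mono
      (Set.image_mono stdSimplex_subset_subStdSimplex)
  have hle : c ⬝ᵥ s⁻¹ • y ≤ M :=
    (le_csSup hbdd ⟨_, inv_sum_smul_mem_stdSimplex hy.1 hs, rfl⟩).trans (le_max_right _ _)
  calc c ⬝ᵥ y = s * (c ⬝ᵥ s⁻¹ • y) := by
        rw [dotProduct_smul, smul_eq_mul, mul_inv_cancel_left₀ hs]
    _ ≤ s * M := mul_le_mul_of_nonneg_left hle (sum_nonneg fun k _ => hy.1 k)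
    _ ≤ M := mul_le_of_le_one_left (le_max_left _ _) hy.2

theorem sSup_dotProduct_image_subStdSimplex (c : ι → ℝ) :
    sSup ((c ⬝ᵥ ·) '' subStdSimplex ι) = max 0 (sSup ((c ⬝ᵥ ·) '' stdSimplex ℝ ι)) := by
  have hbdd := bddAbove_dotProduct_image_subStdSimplex c
  have hnonneg : 0 ≤ sSup ((c ⬝ᵥ ·) '' subStdSimplex ι) :=
    le_csSup_of_le hbdd ⟨0, zero_mem_subStdSimplex, rfl⟩ (dotProduct_zero c).ge
  refine le_antisymm ?_ (max_le hnonneg ?_)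
  · refine csSup_le ⟨_, 0, zero_mem_subStdSimplex, rfl⟩ ?_
    rintro _ ⟨y, hy, rfl⟩
    exact dotProduct_le_max_zero_sSup_of_mem_subStdSimplex c hy
  · refine Real.sSup_le ?_ hnonneg
    rintro _ ⟨z, hz, rfl⟩
    exact le_csSup hbdd ⟨z, stdSimplex_subset_subStdSimplex hz, rfl⟩

lemma dotProduct_mul_sub_const (w a : ℝ) (ν z : ι → ℝ) :
    (fun k => w * (ν k - a)) ⬝ᵥ z = w * (ν ⬝ᵥ z - a * ∑ k, z k) := by
  simp only [dotProduct, mul_sub, sub_mul, sum_sub_distrib, mul_sum, mul_assoc]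

lemma dotProduct_div_sum_mul_sum (ν : ι → ℝ) {y : ι → ℝ} (hy : ∀ k, 0 ≤ y k) :
    (ν ⬝ᵥ fun k => y k / ∑ j, y j) * ∑ j, y j = ν ⬝ᵥ y := by
  by_cases hs : ∑ j, y j = 0
  · simp [(Fintype.sum_eq_zero_iff_of_nonneg hy).1 hs]
  · simp only [div_eq_inv_mul]
    change (ν ⬝ᵥ (∑ j, y j)⁻¹ • y) * _ = _
    rw [dotProduct_smul, smul_eq_mul, mul_comm, mul_inv_cancel_left₀ hs]

end Simplex

theorem lifted_regret_eq_pos_part_general (d T : ℕ)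
    (ν : Fin T → Fin d → ℝ) (w : Fin T → ℝ)
    (y : Fin T → Fin d → ℝ)
    (hy : ∀ t, (∀ k, 0 < y t k) ∧ (∑ k, y t k) ≤ 1)
    (x : Fin T → Fin d → ℝ)
    (hx : ∀ t k, x t k = y t k / ∑ j, y t j)
    (u : Fin T → Fin d → ℝ)
    (hu : ∀ t k, u t k = w t * (ν t k - ∑ j, ν t j * x t j))
    (Rlift Reg : ℝ)
    (hRlift : Rlift = sSup ((fun ys : Fin d → ℝ =>
        ∑ t, ∑ k, u t k * (ys k - y t k)) ''
      {ys : Fin d → ℝ | (∀ k, 0 ≤ ys k) ∧ (∑ k, ys k) ≤ 1}))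
    (hReg : Reg = sSup ((fun xs : Fin d → ℝ =>
        ∑ t, w t * ((∑ k, ν t k * xs k) - ∑ k, ν t k * x t k)) ''
      {xs : Fin d → ℝ | (∀ k, 0 ≤ xs k) ∧ (∑ k, xs k) = 1})) :
    Rlift = max 0 Reg ∧ 0 ≤ Rlift ∧ Reg ≤ Rlift := by
  have hu' : ∀ t, u t = fun k => w t * (ν t k - ν t ⬝ᵥ x t) := fun t => funext (hu t)
  have horth : ∀ t, u t ⬝ᵥ y t = 0 := fun t => by
    rw [hu', dotProduct_mul_sub_const, show x t = _ from funext (hx t),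
      dotProduct_div_sum_mul_sum _ fun k => ((hy t).1 k).le, sub_self, mul_zero]
  have hlift : ∀ z, ∑ t, u t ⬝ᵥ (z - y t) = (∑ t, u t) ⬝ᵥ z := fun z => by
    simp only [dotProduct_sub, horth, sub_zero, sum_dotProduct]
  have hreg : ∀ z ∈ stdSimplex ℝ (Fin d),
      ∑ t, w t * (ν t ⬝ᵥ z - ν t ⬝ᵥ x t) = (∑ t, u t) ⬝ᵥ z := fun z hz => by
    simp only [sum_dotProduct, hu', dotProduct_mul_sub_const, hz.2, mul_one]
  have hmax : Rlift = max 0 Reg :=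
    calc Rlift = sSup (((∑ t, u t) ⬝ᵥ ·) '' subStdSimplex (Fin d)) :=
          hRlift.trans (congrArg sSup (Set.image_congr fun z _ => hlift z))
      _ = max 0 (sSup (((∑ t, u t) ⬝ᵥ ·) '' stdSimplex ℝ (Fin d))) :=
          sSup_dotProduct_image_subStdSimplex _
      _ = max 0 Reg := by
          rw [hReg]
          exact congrArg (fun s => max 0 (sSup s)) (Set.image_congr hreg).symm
  exact ⟨hmax, hmax ▸ le_max_left _ _, hmax ▸ le_max_right _ _⟩

/-- the lifted (nonnegative) regret equals the positive part of the
weighted external regret: `R̃(T) = max{0, Reg(T)}`, hence `R̃(T) ≥ 0` and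
`R̃(T) ≥ Reg(T)`. -/
theorem lifted_regret_eq_pos_part (d T : ℕ) (hd : 1 ≤ d) (hT : 1 ≤ T)
    (ν : Fin T → Fin d → ℝ) (w : Fin T → ℝ) (hw : ∀ t, 0 < w t)
    (y : Fin T → Fin d → ℝ)
    (hy : ∀ t, (∀ k, 0 < y t k) ∧ (∑ k, y t k) ≤ 1)
    (x : Fin T → Fin d → ℝ)
    (hx : ∀ t k, x t k = y t k / ∑ j, y t j)
    (u : Fin T → Fin d → ℝ)
    (hu : ∀ t k, u t k = w t * (ν t k - ∑ j, ν t j * x t j))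
    (Rlift Reg : ℝ)
    (hRlift : Rlift = sSup ((fun ys : Fin d → ℝ =>
        ∑ t, ∑ k, u t k * (ys k - y t k)) ''
      {ys : Fin d → ℝ | (∀ k, 0 ≤ ys k) ∧ (∑ k, ys k) ≤ 1}))
    (hReg : Reg = sSup ((fun xs : Fin d → ℝ =>
        ∑ t, w t * ((∑ k, ν t k * xs k) - ∑ k, ν t k * x t k)) ''
      {xs : Fin d → ℝ | (∀ k, 0 ≤ xs k) ∧ (∑ k, xs k) = 1})) :
    Rlift = max 0 Reg ∧ 0 ≤ Rlift ∧ Reg ≤ Rlift :=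
  lifted_regret_eq_pos_part_general d T ν w y hy x hx u hu Rlift Reg hRlift hReg
end

section
/- Let d ≥ 1 and H > 0. Let ν^{(t)}, ν^{(t−1)} ∈ ℝ^d with ‖ν^{(t)}‖_∞ ≤ H, let x^{(t)}, x^{(t−1)} ∈ Δ^d, and let w_t, w_{t−1} > 0. Define u^{(s)} := w_s·(ν^{(s)} − ⟨ν^{(s)}, x^{(s)}⟩·1_d) for s ∈ {t−1, t} and κ^{(t)} := w_t/w_{t−1}. Then ‖u^{(t)} − κ^{(t)}·u^{(t−1)}‖_∞² ≤ w_t²·(6·‖ν^{(t)} − ν^{(t−1)}‖_∞² + 4·H²·‖x^{(t)} − x^{(t−1)}‖₁²). -/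
/-- ℓ¹ norm on `Fin d → ℝ`. -/
noncomputable def l1Norm {d : ℕ} (v : Fin d → ℝ) : ℝ := ∑ k, |v k|

/-- ℓ∞ (supremum) norm on `Fin d → ℝ`. -/
noncomputable def lInfNorm {d : ℕ} (v : Fin d → ℝ) : ℝ := ⨆ k, |v k|

lemma abs_le_lInf {d : ℕ} (v : Fin d → ℝ) (k : Fin d) : |v k| ≤ lInfNorm v :=
  le_ciSup (Set.Finite.bddAbove (Set.finite_range fun k => |v k|)) k

lemma lInf_le {d : ℕ} [Nonempty (Fin d)] (v : Fin d → ℝ) (c : ℝ) (h : ∀ k, |v k| ≤ c) :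
    lInfNorm v ≤ c := ciSup_le h

/-- bound on the optimism gap of the utility signals:
`‖u^{(t)} − κ^{(t)} u^{(t−1)}‖_∞² ≤ w_t²(6‖ν^{(t)} − ν^{(t−1)}‖_∞² + 4H²‖x^{(t)} − x^{(t−1)}‖₁²)`. -/
theorem utility_gap_bound (d : ℕ) (hd : 1 ≤ d) (H : ℝ) (hH : 0 < H)
    (νt νt' : Fin d → ℝ) (hν : lInfNorm νt ≤ H)
    (xt xt' : Fin d → ℝ)
    (hxt : (∀ k, 0 ≤ xt k) ∧ (∑ k, xt k) = 1)
    (hxt' : (∀ k, 0 ≤ xt' k) ∧ (∑ k, xt' k) = 1)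
    (wt wt' : ℝ) (hwt : 0 < wt) (hwt' : 0 < wt')
    (ut ut' : Fin d → ℝ)
    (hut : ∀ k, ut k = wt * (νt k - ∑ j, νt j * xt j))
    (hut' : ∀ k, ut' k = wt' * (νt' k - ∑ j, νt' j * xt' j))
    (κ : ℝ) (hκ : κ = wt / wt') :
    (lInfNorm (fun k => ut k - κ * ut' k)) ^ 2 ≤
      wt ^ 2 * (6 * (lInfNorm (fun k => νt k - νt' k)) ^ 2
        + 4 * H ^ 2 * (l1Norm (fun k => xt k - xt' k)) ^ 2) := by
  obtain ⟨hx0, hx1⟩ := hxt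
  obtain ⟨hx0', hx1'⟩ := hxt'
  have hne : Nonempty (Fin d) := ⟨⟨0, hd⟩⟩
  set A := lInfNorm (fun k => νt k - νt' k) with hA
  set B := l1Norm (fun k => xt k - xt' k) with hB
  have hA0 : 0 ≤ A := le_trans (abs_nonneg _) (abs_le_lInf (fun k => νt k - νt' k) ⟨0, hd⟩)
  have hB0 : 0 ≤ B := Finset.sum_nonneg fun i _ => abs_nonneg _
  have hκw : κ * wt' = wt := by
    rw [hκ]; field_simp
  have hNbd : ∀ j, |νt j| ≤ H := fun j => le_trans (abs_le_lInf νt j) hν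
  have hAbd : ∀ j, |νt j - νt' j| ≤ A := fun j => abs_le_lInf (fun k => νt k - νt' k) j
  have hS1 : |∑ j, νt j * (xt j - xt' j)| ≤ H * B := by
    calc |∑ j, νt j * (xt j - xt' j)| ≤ ∑ j, |νt j * (xt j - xt' j)| :=
          Finset.abs_sum_le_sum_abs _ _
      _ = ∑ j, |νt j| * |xt j - xt' j| := by simp [abs_mul]
      _ ≤ ∑ j, H * |xt j - xt' j| :=
          Finset.sum_le_sum fun j _ => mul_le_mul_of_nonneg_right (hNbd j) (abs_nonneg _)
      _ = H * B := by rw [hB]; simp [l1Norm, Finset.mul_sum]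
  have hS2 : |∑ j, (νt j - νt' j) * xt' j| ≤ A := by
    calc |∑ j, (νt j - νt' j) * xt' j| ≤ ∑ j, |(νt j - νt' j) * xt' j| :=
          Finset.abs_sum_le_sum_abs _ _
      _ = ∑ j, |νt j - νt' j| * xt' j := by
          refine Finset.sum_congr rfl fun j _ => ?_
          rw [abs_mul, abs_of_nonneg (hx0' j)]
      _ ≤ ∑ j, A * xt' j :=
          Finset.sum_le_sum fun j _ => mul_le_mul_of_nonneg_right (hAbd j) (hx0' j)
      _ = A := by rw [← Finset.mul_sum, hx1', mul_one]
  have hSdecomp : (∑ j, νt j * xt j) - (∑ j, νt' j * xt' j)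
      = (∑ j, νt j * (xt j - xt' j)) + ∑ j, (νt j - νt' j) * xt' j := by
    rw [← Finset.sum_add_distrib, ← Finset.sum_sub_distrib]
    exact Finset.sum_congr rfl fun j _ => by ring
  have hpt : ∀ k, |ut k - κ * ut' k| ≤ wt * (2 * A + H * B) := by
    intro k
    have heq : ut k - κ * ut' k
        = wt * ((νt k - νt' k) - ((∑ j, νt j * xt j) - ∑ j, νt' j * xt' j)) := by
      rw [hut k, hut' k, ← mul_assoc, hκw]; ring
    rw [heq, abs_mul, abs_of_pos hwt]
    apply mul_le_mul_of_nonneg_left _ hwt.le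
    rw [hSdecomp]
    have h1 : |(νt k - νt' k) - ((∑ j, νt j * (xt j - xt' j)) + ∑ j, (νt j - νt' j) * xt' j)|
        ≤ |νt k - νt' k| + (|∑ j, νt j * (xt j - xt' j)| + |∑ j, (νt j - νt' j) * xt' j|) := by
      calc _ ≤ |νt k - νt' k| + |(∑ j, νt j * (xt j - xt' j)) + ∑ j, (νt j - νt' j) * xt' j| :=
            abs_sub _ _
        _ ≤ _ := by gcongr; exact abs_add_le _ _
    have h2 := hAbd k
    linarith [hS1, hS2]
  have hlinf : lInfNorm (fun k => ut k - κ * ut' k) ≤ wt * (2 * A + H * B) :=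
    lInf_le _ _ hpt
  have hlinf0 : 0 ≤ lInfNorm (fun k => ut k - κ * ut' k) :=
    le_trans (abs_nonneg _) (abs_le_lInf _ ⟨0, hd⟩)
  have hsq : (lInfNorm (fun k => ut k - κ * ut' k)) ^ 2 ≤ (wt * (2 * A + H * B)) ^ 2 := by
    apply pow_le_pow_left₀ hlinf0 hlinf
  nlinarith [sq_nonneg (A - H * B), sq_nonneg wt, mul_pos hwt hwt, sq_nonneg (wt * (A - H * B))]
end

section
/- Let H ≥ 1 be an integer, set α_t := (H+1)/(H+t) for t ≥ 1, and define α_t^t := α_t and α_t^j := α_j·∏_{k=j+1}^t (1 − α_k) for 1 ≤ j < t. Then for every t ≥ 1: Σ_{j=1}^t α_t^j / j = (H+1)/(H·t) − (H+1)·(t−1)!·(H−1)!/(H+t)!, and in particular Σ_{j=1}^t α_t^j / j ≤ (1 + 1/H)/t. -/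
/-- Value-iteration step size `α_t = (H+1)/(H+t)`. -/
noncomputable def stepAlpha (H t : ℕ) : ℝ := ((H : ℝ) + 1) / ((H : ℝ) + t)

/-- Anytime-averaging weights `α_t^j = α_j ∏_{k=j+1}^t (1 − α_k)` (so `α_t^t = α_t`). -/
noncomputable def alphaW (H t j : ℕ) : ℝ :=
  stepAlpha H j * ∏ k ∈ Finset.Icc (j + 1) t, (1 - stepAlpha H k)

/-! The weighted sum `S t = Σ_{j ≤ t} α_t^j / j` obeys `S (t+1) = (1 - α_{t+1}) S t + α_{t+1}/(t+1)`,
because passing from `t` to `t+1` multiplies every old weight by `1 - α_{t+1} = t/(H+t+1)` and adds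
the new weight `α_{t+1}`. The closed form satisfies the same recursion, since the factor
`(t-1)!/(H+t)!` also gets multiplied by `t/(H+t+1)`, and both equal `α_1 = 1` at `t = 1`.
The bound drops the nonnegative factorial term. -/

open Finset

lemma stepAlpha_one (H : ℕ) : stepAlpha H 1 = 1 := by
  rw [stepAlpha, Nat.cast_one, div_self (by positivity)]

lemma one_sub_stepAlpha_succ (H t : ℕ) :
    1 - stepAlpha H (t + 1) = (t : ℝ) / ((H : ℝ) + t + 1) := by
  rw [stepAlpha, Nat.cast_succ]
  field_simp
  ring

lemma alphaW_self (H t : ℕ) : alphaW H t t = stepAlpha H t := by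
  rw [alphaW, Icc_eq_empty (by omega), prod_empty, mul_one]

lemma alphaW_succ {H t j : ℕ} (hj : j ≤ t) :
    alphaW H (t + 1) j = alphaW H t j * (1 - stepAlpha H (t + 1)) := by
  rw [alphaW, alphaW, prod_Icc_succ_top (by omega), mul_assoc]

lemma sum_alphaW_div_succ (H t : ℕ) :
    ∑ j ∈ Icc 1 (t + 1), alphaW H (t + 1) j / j =
      (∑ j ∈ Icc 1 t, alphaW H t j / j) * (1 - stepAlpha H (t + 1))
        + stepAlpha H (t + 1) / (t + 1 : ℕ) := by
  rw [sum_Icc_succ_top (by omega), alphaW_self, sum_mul]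
  congr 1
  refine sum_congr rfl fun j hj => ?_
  rw [alphaW_succ (mem_Icc.mp hj).2, div_mul_eq_mul_div]

lemma factorial_div_factorial_succ (H : ℕ) {t : ℕ} (ht : 1 ≤ t) :
    ((t + 1 - 1).factorial : ℝ) / (H + (t + 1)).factorial =
      (t : ℝ) / ((H : ℝ) + t + 1) * ((t - 1).factorial / (H + t).factorial) := by
  obtain ⟨s, rfl⟩ : ∃ s, t = s + 1 := ⟨t - 1, by omega⟩
  rw [show H + (s + 1 + 1) = H + (s + 1) + 1 by ring, Nat.add_sub_cancel, Nat.add_sub_cancel,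
    Nat.factorial_succ (H + (s + 1)), Nat.factorial_succ s]
  push_cast
  field_simp

lemma sum_alphaW_div_eq {H : ℕ} (hH : 1 ≤ H) {t : ℕ} (ht : 1 ≤ t) :
    ∑ j ∈ Icc 1 t, alphaW H t j / j =
      ((H : ℝ) + 1) / ((H : ℝ) * t)
        - ((H : ℝ) + 1) * ((t - 1).factorial : ℝ) * ((H - 1).factorial : ℝ) /
            ((H + t).factorial : ℝ) := by
  have hH0 : (H : ℝ) ≠ 0 := by positivity
  induction t, ht using Nat.le_induction with
  | base =>
    obtain ⟨m, rfl⟩ : ∃ m, H = m + 1 := ⟨H - 1, by omega⟩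
    rw [Icc_self, sum_singleton, alphaW_self, stepAlpha_one, Nat.add_sub_cancel,
      Nat.factorial_succ (m + 1), Nat.factorial_succ m]
    push_cast
    field_simp
    ring
  | succ t ht ih =>
    have hfactorial : ((H : ℝ) + 1) * ((t + 1 - 1).factorial : ℝ) * ((H - 1).factorial : ℝ) /
          ((H + (t + 1)).factorial : ℝ) =
        ((H : ℝ) + 1) * (H - 1).factorial *
          ((t : ℝ) / ((H : ℝ) + t + 1) * ((t - 1).factorial / (H + t).factorial)) := by
      rw [← factorial_div_factorial_succ H ht]
      ring
    rw [sum_alphaW_div_succ, ih, one_sub_stepAlpha_succ, stepAlpha, hfactorial]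
    push_cast
    field_simp
    ring

/-- the identity
`Σ_{j=1}^t α_t^j / j = (H+1)/(H·t) − (H+1)·(t−1)!·(H−1)!/(H+t)!` and the bound
`Σ_{j=1}^t α_t^j / j ≤ (1 + 1/H)/t`. -/
theorem alphaW_sum_div_bound (H : ℕ) (hH : 1 ≤ H) (t : ℕ) (ht : 1 ≤ t) :
    (∑ j ∈ Finset.Icc 1 t, alphaW H t j / j) =
      ((H : ℝ) + 1) / ((H : ℝ) * t)
        - ((H : ℝ) + 1) * (Nat.factorial (t - 1) : ℝ) * (Nat.factorial (H - 1) : ℝ) /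
            (Nat.factorial (H + t) : ℝ)
    ∧ (∑ j ∈ Finset.Icc 1 t, alphaW H t j / j) ≤ (1 + 1 / (H : ℝ)) / t := by
  have heq := sum_alphaW_div_eq hH ht
  refine ⟨heq, ?_⟩
  rw [heq, one_add_div (by positivity), div_div]
  exact sub_le_self _ (by positivity)
end

section
/- Let H ≥ 1 and T ≥ 1 be integers, set γ := 1 + 1/H, and let the weights α_t^j be defined from α_t := (H+1)/(H+t) by α_t^t := α_t and α_t^j := α_j·∏_{k=j+1}^t (1 − α_k) for 1 ≤ j < t. Let M ≥ 0 and suppose δ : {1,…,T} × {1,…,H+1} → ℝ satisfies δ^t_{H+1} = 0 for all t and, for all h ∈ {1,…,H} and t ∈ {1,…,T}, δ^t_h ≤ M/t + Σ_{j=1}^t α_t^j·δ^j_{h+1}. Then for all h ∈ {1,…,H} and t ∈ {1,…,T}: δ^t_h ≤ (Σ_{h'=h}^H γ^{2(H−h'+1/2)})·M/t; in particular δ^T_1 ≤ e²·H·M/T. -/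
open Finset

namespace stepAlpha

lemma nonneg (H t : ℕ) : 0 ≤ stepAlpha H t := by
  unfold stepAlpha
  positivity

lemma le_one (H : ℕ) {t : ℕ} (ht : 1 ≤ t) : stepAlpha H t ≤ 1 := by
  have ht' : (1 : ℝ) ≤ t := by exact_mod_cast ht
  unfold stepAlpha
  rw [div_le_one (by positivity)]
  linarith

lemma one (H : ℕ) : stepAlpha H 1 = 1 := by
  rw [stepAlpha, Nat.cast_one, div_self (by positivity)]

lemma one_sub_succ (H n : ℕ) : 1 - stepAlpha H (n + 1) = n / ((H : ℝ) + (n + 1)) := by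
  unfold stepAlpha
  push_cast
  field_simp
  ring

end stepAlpha

namespace alphaW

lemma nonneg (H t j : ℕ) : 0 ≤ alphaW H t j :=
  mul_nonneg (stepAlpha.nonneg H j) <| prod_nonneg fun k hk =>
    sub_nonneg.mpr <| stepAlpha.le_one H (by grind)

lemma self (H t : ℕ) : alphaW H t t = stepAlpha H t := by
  simp [alphaW]

lemma succ_of_le (H : ℕ) {n j : ℕ} (hj : j ≤ n) :
    alphaW H (n + 1) j = (1 - stepAlpha H (n + 1)) * alphaW H n j := by
  rw [alphaW, alphaW, prod_Icc_succ_top (by omega)]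
  ring

lemma sum_div_le {H : ℕ} (hH : 0 < H) {t : ℕ} (ht : 1 ≤ t) :
    ∑ j ∈ Icc 1 t, alphaW H t j / j ≤ (1 + 1 / (H : ℝ)) / t := by
  have hH' : (0 : ℝ) < H := by exact_mod_cast hH
  induction t, ht using Nat.le_induction with
  | base =>
    simp only [Icc_self, sum_singleton, self, stepAlpha.one]
    norm_num
  | succ n hn ih =>
    have hn' : (0 : ℝ) < n := by exact_mod_cast hn
    rw [sum_Icc_succ_top (by omega), self,
      sum_congr rfl fun j hj => by rw [succ_of_le H (mem_Icc.mp hj).2, mul_div_assoc],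
      ← mul_sum]
    calc (1 - stepAlpha H (n + 1)) * ∑ j ∈ Icc 1 n, alphaW H n j / j
          + stepAlpha H (n + 1) / ↑(n + 1)
        ≤ (1 - stepAlpha H (n + 1)) * ((1 + 1 / (H : ℝ)) / n)
          + stepAlpha H (n + 1) / ↑(n + 1) := by
          gcongr
          exact sub_nonneg.mpr (stepAlpha.le_one H (by omega))
      -- the induction closes with equality exactly because `γ = 1 + 1/H`
      _ = (1 + 1 / (H : ℝ)) / ↑(n + 1) := by
          rw [stepAlpha.one_sub_succ, stepAlpha]
          push_cast
          field_simp
          ring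

end alphaW

lemma one_add_sub_one_mul_sum_pow_le {γ : ℝ} (hγ : 1 ≤ γ) (n : ℕ) :
    1 + (γ - 1) * ∑ i ∈ range n, γ ^ (2 * i + 1) ≤ γ ^ (2 * n + 1) := by
  induction n with
  | zero => simpa using hγ
  | succ n ih =>
    calc 1 + (γ - 1) * ∑ i ∈ range (n + 1), γ ^ (2 * i + 1)
        = 1 + (γ - 1) * ∑ i ∈ range n, γ ^ (2 * i + 1) + (γ - 1) * γ ^ (2 * n + 1) := by
          rw [sum_range_succ]
          ring
      _ ≤ γ ^ (2 * n + 1) + (γ - 1) * γ ^ (2 * n + 1) := by gcongr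
      _ = γ ^ (2 * n + 2) := by ring
      _ ≤ γ ^ (2 * (n + 1) + 1) := pow_le_pow_right₀ hγ (by omega)

noncomputable def gapConstant (γ : ℝ) (H h : ℕ) : ℝ :=
  ∑ h' ∈ Icc h H, γ ^ (2 * (H - h') + 1)

namespace gapConstant

lemma nonneg {γ : ℝ} (hγ : 0 ≤ γ) (H h : ℕ) : 0 ≤ gapConstant γ H h :=
  sum_nonneg fun _ _ => by positivity

lemma succ_self (γ : ℝ) (H : ℕ) : gapConstant γ H (H + 1) = 0 := by
  simp [gapConstant]

lemma eq_sum_range (γ : ℝ) (H h : ℕ) :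
    gapConstant γ H h = ∑ i ∈ range (H + 1 - h), γ ^ (2 * i + 1) :=
  sum_nbij' (fun h' => H - h') (fun i => H - i) (by grind)
    (by grind) (by grind) (by grind) fun _ _ => rfl

lemma one_add_mul_succ_le {γ : ℝ} (hγ : 1 ≤ γ) {H h : ℕ} (hh : h ≤ H) :
    1 + γ * gapConstant γ H (h + 1) ≤ gapConstant γ H h := by
  rw [eq_sum_range, eq_sum_range, show H + 1 - h = (H - h) + 1 by omega,
    show H + 1 - (h + 1) = H - h by omega, sum_range_succ]
  linarith [one_add_sub_one_mul_sum_pow_le hγ (H - h)]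

lemma one_le_mul_exp_two {H : ℕ} (hH : 0 < H) :
    gapConstant (1 + 1 / (H : ℝ)) H 1 ≤ H * Real.exp 2 := by
  have hH' : (0 : ℝ) < H := by exact_mod_cast hH
  have hγ : (1 : ℝ) ≤ 1 + 1 / H := le_add_of_nonneg_right (by positivity)
  have hpow : (1 + 1 / (H : ℝ)) ^ (2 * H) ≤ Real.exp 2 :=
    calc (1 + 1 / (H : ℝ)) ^ (2 * H) ≤ Real.exp (1 / H) ^ (2 * H) := by
          gcongr
          linarith [Real.add_one_le_exp (1 / (H : ℝ))]
      _ = Real.exp 2 := by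
          rw [← Real.exp_nat_mul]
          push_cast
          field_simp
  calc gapConstant (1 + 1 / (H : ℝ)) H 1 ≤ #(Icc 1 H) • Real.exp 2 :=
        sum_le_card_nsmul _ _ _ fun h' hh' =>
          (pow_le_pow_right₀ hγ (by grind)).trans hpow
    _ = H * Real.exp 2 := by simp

end gapConstant

theorem le_mul_div_of_gap_recursion {H T : ℕ} {γ M : ℝ} (hM : 0 ≤ M)
    {w : ℕ → ℕ → ℝ} (hw : ∀ t j, 0 ≤ w t j)
    (hw_sum : ∀ t ∈ Icc 1 T, ∑ j ∈ Icc 1 t, w t j / j ≤ γ / t)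
    {c : ℕ → ℝ} (hc_nonneg : ∀ h, 0 ≤ c h) (hc : ∀ h ∈ Icc 1 H, 1 + γ * c (h + 1) ≤ c h)
    {δ : ℕ → ℕ → ℝ} (hend : ∀ t ∈ Icc 1 T, δ t (H + 1) ≤ c (H + 1) * M / t)
    (hrec : ∀ h ∈ Icc 1 H, ∀ t ∈ Icc 1 T,
      δ t h ≤ M / t + ∑ j ∈ Icc 1 t, w t j * δ j (h + 1)) :
    ∀ h ∈ Icc 1 (H + 1), ∀ t ∈ Icc 1 T, δ t h ≤ c h * M / t := by
  intro h hh
  obtain ⟨hh1, hhH⟩ := mem_Icc.mp hh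
  refine Nat.decreasingInduction' (P := fun h => ∀ t ∈ Icc 1 T, δ t h ≤ c h * M / t)
    (fun h' hlt hle ih t ht => ?_) hhH hend
  have hh' : h' ∈ Icc 1 H := mem_Icc.mpr ⟨hh1.trans hle, by omega⟩
  have hcM : 0 ≤ c (h' + 1) * M := mul_nonneg (hc_nonneg _) hM
  calc δ t h' ≤ M / t + ∑ j ∈ Icc 1 t, w t j * δ j (h' + 1) := hrec h' hh' t ht
    _ ≤ M / t + ∑ j ∈ Icc 1 t, w t j * (c (h' + 1) * M / j) := by
        gcongr with j hj
        · exact hw t j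
        · exact ih j (Icc_subset_Icc_right (mem_Icc.mp ht).2 hj)
    _ = M / t + c (h' + 1) * M * ∑ j ∈ Icc 1 t, w t j / j := by
        rw [mul_sum]
        congr 1
        exact sum_congr rfl fun j _ => by ring
    _ ≤ M / t + c (h' + 1) * M * (γ / t) := by gcongr; exact hw_sum t ht
    _ = (1 + γ * c (h' + 1)) * M / t := by ring
    _ ≤ c h' * M / t := by gcongr; exact hc h' hh'

/-- the CCE-gap recursion.  If `δ^t_{H+1} = 0` and
`δ^t_h ≤ M/t + Σ_{j=1}^t α_t^j δ^j_{h+1}`, then with `γ = 1 + 1/H`,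
`δ^t_h ≤ (Σ_{h'=h}^H γ^{2(H−h')+1}) M/t`; in particular `δ^T_1 ≤ e² H M / T`.
(Note `γ^{2(H−h'+1/2)} = γ^{2(H−h')+1}`.) -/
theorem cce_gap_recursion (H T : ℕ) (hH : 1 ≤ H) (hT : 1 ≤ T)
    (M : ℝ) (hM : 0 ≤ M)
    (δ : ℕ → ℕ → ℝ)
    (hend : ∀ t ∈ Finset.Icc 1 T, δ t (H + 1) = 0)
    (hrec : ∀ h ∈ Finset.Icc 1 H, ∀ t ∈ Finset.Icc 1 T,
      δ t h ≤ M / t + ∑ j ∈ Finset.Icc 1 t, alphaW H t j * δ j (h + 1)) :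
    (∀ h ∈ Finset.Icc 1 H, ∀ t ∈ Finset.Icc 1 T,
      δ t h ≤ (∑ h' ∈ Finset.Icc h H, (1 + 1 / (H : ℝ)) ^ (2 * (H - h') + 1)) * M / t)
    ∧ δ T 1 ≤ Real.exp 2 * (H : ℝ) * M / T := by
  have hγ : (1 : ℝ) ≤ 1 + 1 / H := le_add_of_nonneg_right (by positivity)
  have hbound : ∀ h ∈ Icc 1 (H + 1), ∀ t ∈ Icc 1 T,
      δ t h ≤ gapConstant (1 + 1 / H) H h * M / t :=
    le_mul_div_of_gap_recursion hM (alphaW.nonneg H)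
      (fun t ht => alphaW.sum_div_le hH (mem_Icc.mp ht).1)
      (gapConstant.nonneg (by linarith) H) (fun h hh => gapConstant.one_add_mul_succ_le hγ
        (mem_Icc.mp hh).2)
      (fun t ht => by simp [hend t ht, gapConstant.succ_self]) hrec
  have hbound' : ∀ h ∈ Icc 1 H, ∀ t ∈ Icc 1 T,
      δ t h ≤ gapConstant (1 + 1 / H) H h * M / t := fun h hh =>
    hbound h (Icc_subset_Icc_right (Nat.le_succ H) hh)
  refine ⟨hbound', ?_⟩
  calc δ T 1 ≤ gapConstant (1 + 1 / H) H 1 * M / T :=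
        hbound' 1 (mem_Icc.mpr ⟨le_rfl, hH⟩) T (mem_Icc.mpr ⟨hT, le_rfl⟩)
    _ ≤ H * Real.exp 2 * M / T := by gcongr; exact gapConstant.one_le_mul_exp_two hH
    _ = Real.exp 2 * H * M / T := by ring
end

section
/- Let S and A be nonempty finite sets, let H ≥ 1 be an integer, and for each h ∈ {1,…,H} let r_h : S × A → ℝ be a reward function and P_h(·|s,a) a probability distribution on S for each (s,a). Let π^t_h : S → Δ(A) be arbitrary policies for t ≥ 1 and h ∈ {1,…,H+1}, and let α_t := (H+1)/(H+t) (so α_1 = 1). Define recursively: V^0_h(s) := 0 and V^t_{H+1}(s) := 0, and V^t_h(s) := (1 − α_t)·V^{t−1}_h(s) + α_t·Σ_{a∈A} π^t_h(a|s)·(r_h(s,a) + Σ_{s'∈S} P_h(s'|s,a)·V^t_{h+1}(s')); similarly Q^0_h(s,a) := 0 and Q^t_{H+1}(s,a) := 0, and Q^t_h(s,a) := (1 − α_t)·Q^{t−1}_h(s,a) + α_t·(r_h(s,a) + Σ_{s'∈S} P_h(s'|s,a)·Σ_{a'∈A} π^t_{h+1}(a'|s')·Q^t_{h+1}(s',a')).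 Then for all t ≥ 1, h ∈ {1,…,H}, s ∈ S, and a ∈ A: Q^t_h(s,a) = r_h(s,a) + Σ_{s'∈S} P_h(s'|s,a)·V^t_{h+1}(s'). -/
/-- equivalence of the Q-based and V-based value updates in an episodic
Markov game: the iterates satisfy `Q^t_h(s,a) = r_h(s,a) + Σ_{s'} P_h(s'|s,a)·V^t_{h+1}(s')`. -/
theorem q_v_update_equivalence
    (S A : Type*) [Fintype S] [Fintype A] [Nonempty S] [Nonempty A]
    (H : ℕ) (hH : 1 ≤ H)
    (r : ℕ → S → A → ℝ)
    (P : ℕ → S → A → S → ℝ)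
    (hP : ∀ h ∈ Finset.Icc 1 H, ∀ s a,
      (∀ s', 0 ≤ P h s a s') ∧ (∑ s', P h s a s') = 1)
    (π : ℕ → ℕ → S → A → ℝ)
    (hπ : ∀ t h s, (∀ a, 0 ≤ π t h s a) ∧ (∑ a, π t h s a) = 1)
    (α : ℕ → ℝ) (hα : ∀ t, α t = ((H : ℝ) + 1) / ((H : ℝ) + t))
    (V : ℕ → ℕ → S → ℝ) (Q : ℕ → ℕ → S → A → ℝ)
    (hV0 : ∀ h s, V 0 h s = 0)
    (hVend : ∀ t s, V t (H + 1) s = 0)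
    (hQ0 : ∀ h s a, Q 0 h s a = 0)
    (hQend : ∀ t s a, Q t (H + 1) s a = 0)
    (hVrec : ∀ t, 1 ≤ t → ∀ h ∈ Finset.Icc 1 H, ∀ s,
      V t h s = (1 - α t) * V (t - 1) h s
        + α t * ∑ a, π t h s a *
            (r h s a + ∑ s', P h s a s' * V t (h + 1) s'))
    (hQrec : ∀ t, 1 ≤ t → ∀ h ∈ Finset.Icc 1 H, ∀ s a,
      Q t h s a = (1 - α t) * Q (t - 1) h s a
        + α t * (r h s a + ∑ s', P h s a s' *
            ∑ a', π t (h + 1) s' a' * Q t (h + 1) s' a')) :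
    ∀ t, 1 ≤ t → ∀ h ∈ Finset.Icc 1 H, ∀ s a,
      Q t h s a = r h s a + ∑ s', P h s a s' * V t (h + 1) s' := by
  have hα1 : α 1 = 1 := by
    rw [hα]
    have : (H : ℝ) + 1 ≠ 0 := by positivity
    push_cast
    field_simp
  suffices key : ∀ t, 1 ≤ t → ∀ k h, 1 ≤ h → h ≤ H → H - h ≤ k → ∀ s a,
      Q t h s a = r h s a + ∑ s', P h s a s' * V t (h + 1) s' by
    intro t ht h hh s a
    rw [Finset.mem_Icc] at hh
    exact key t ht (H - h) h hh.1 hh.2 le_rfl s a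
  intro t
  induction t with
  | zero => intro h0; omega
  | succ n ihn =>
    intro _
    have step : ∀ h, 1 ≤ h → h ≤ H →
        (∀ s', V (n+1) (h+1) s' = (1 - α (n+1)) * V n (h+1) s'
          + α (n+1) * ∑ a', π (n+1) (h+1) s' a' * Q (n+1) (h+1) s' a') →
        ∀ s a, Q (n+1) h s a = r h s a + ∑ s', P h s a s' * V (n+1) (h+1) s' := by
      intro h hh1 hh2 hVW s a
      have hQn : (1 - α (n+1)) * Q n h s a
          = (1 - α (n+1)) * (r h s a + ∑ s', P h s a s' * V n (h+1) s') := by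
        rcases Nat.eq_zero_or_pos n with rfl | hn
        · simp [hQ0, hα1, hV0]
        · rw [ihn hn (H - h) h hh1 hh2 le_rfl s a]
      have hq := hQrec (n+1) (by omega) h (Finset.mem_Icc.mpr ⟨hh1, hh2⟩) s a
      simp only [Nat.add_sub_cancel] at hq
      have hsum : ∑ s', P h s a s' * V (n+1) (h+1) s'
          = (1 - α (n+1)) * (∑ s', P h s a s' * V n (h+1) s')
            + α (n+1) * ∑ s', P h s a s' *
                (∑ a', π (n+1) (h+1) s' a' * Q (n+1) (h+1) s' a') := by
        rw [Finset.mul_sum, Finset.mul_sum, ← Finset.sum_add_distrib]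
        refine Finset.sum_congr rfl fun s' _ => ?_
        rw [hVW s']
        ring
      rw [hq, hsum, hQn]
      ring
    intro k
    induction k with
    | zero =>
      intro h hh1 hh2 hk s a
      have hhH : h = H := by omega
      refine step h hh1 hh2 (fun s' => ?_) s a
      simp [hhH, hVend, hQend]
    | succ k ihk =>
      intro h hh1 hh2 hk s a
      by_cases hhH : h = H
      · refine step h hh1 hh2 (fun s' => ?_) s a
        simp [hhH, hVend, hQend]
      · have hlt : h < H := lt_of_le_of_ne hh2 hhH
        refine step h hh1 hh2 (fun s' => ?_) s a
        have hv := hVrec (n+1) (by omega) (h+1)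
          (Finset.mem_Icc.mpr ⟨by omega, by omega⟩) s'
        simp only [Nat.add_sub_cancel] at hv
        rw [hv]
        congr 1
        congr 1
        refine Finset.sum_congr rfl fun a' _ => ?_
        rw [ihk (h+1) (by omega) (by omega) (by omega) s' a']
end
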